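/- arXiv:1108.3373 — 10 statements merged into one kernel-verified Lean document; each statement's English description precedes it below -/
import Mathlib

section
/- For every integer ξ and all integers i, j with 0 ≤ i ≤ n−1 and 0 ≤ j ≤ n−1, the carry function satisfies δ(i, jξ) = j·(ξ − ξ̄)/n − (jξ − (jξ)‾)/n + ∑_{k=0}^{j−1} δ(i + kξ, ξ). -/
/-- The carry (Delta-2) function: for integers `η, κ`,
`δ(η, κ) = (η̄ + κ̄ − (η+κ)‾)/n`, where `x̄ = x % n` is the residue of `x` modulo `n`. -/
def carry (n η κ : ℤ) : ℤ := (η % n + κ % n - (η + κ) % n) / n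

lemma mul_carry (n a b : ℤ) :
    n * carry n a b = a % n + b % n - (a + b) % n := by
  have h : (a % n + b % n) % n = (a + b) % n := by
    conv_rhs => rw [Int.add_emod]
  have hd : n ∣ (a % n + b % n - (a + b) % n) := by
    apply Int.dvd_of_emod_eq_zero
    rw [Int.sub_emod, h]
    simp
  exact Int.mul_ediv_cancel' hd

lemma sum_tel (n i ξ : ℤ) (m : ℕ) :
    ∑ k ∈ Finset.range m, ((i + (k : ℤ) * ξ) % n + ξ % n - (i + (k : ℤ) * ξ + ξ) % n)
      = i % n + (m : ℤ) * (ξ % n) - (i + (m : ℤ) * ξ) % n := by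
  induction m with
  | zero => simp
  | succ m ih =>
    rw [Finset.sum_range_succ, ih]
    push_cast
    ring_nf

/-- For every integer `ξ` and all integers `i, j` with `0 ≤ i ≤ n−1` and `0 ≤ j ≤ n−1`,
`δ(i, jξ) = j·(ξ − ξ̄)/n − (jξ − (jξ)‾)/n + ∑_{k=0}^{j−1} δ(i + kξ, ξ)`. -/
theorem stmt1 (n : ℤ) (hn : 2 ≤ n) (ξ i j : ℤ)
    (hi0 : 0 ≤ i) (hi1 : i ≤ n - 1) (hj0 : 0 ≤ j) (hj1 : j ≤ n - 1) :
    carry n i (j * ξ) =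
      j * ((ξ - ξ % n) / n) - (j * ξ - (j * ξ) % n) / n +
        ∑ k ∈ Finset.range j.toNat, carry n (i + (k : ℤ) * ξ) ξ := by
  have hn0 : n ≠ 0 := by omega
  apply mul_left_cancel₀ hn0
  have hj : ((j.toNat : ℤ)) = j := Int.toNat_of_nonneg hj0
  have hdξ : n ∣ (ξ - ξ % n) := ⟨ξ / n, by
    have := Int.mul_ediv_add_emod ξ n; linarith⟩
  have hdjξ : n ∣ (j * ξ - (j * ξ) % n) := ⟨(j * ξ) / n, by
    have := Int.mul_ediv_add_emod (j * ξ) n; linarith⟩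
  rw [mul_carry, mul_add, mul_sub, mul_comm j ((ξ - ξ % n) / n), ← mul_assoc,
    Int.mul_ediv_cancel' hdξ, Int.mul_ediv_cancel' hdjξ, Finset.mul_sum]
  have hc : ∀ k ∈ Finset.range j.toNat, n * carry n (i + (k : ℤ) * ξ) ξ
      = ((i + (k : ℤ) * ξ) % n + ξ % n - (i + (k : ℤ) * ξ + ξ) % n) :=
    fun k _ => mul_carry n _ _
  rw [Finset.sum_congr rfl hc, sum_tel n i ξ j.toNat, hj]
  have hi : i % n = i := Int.emod_eq_of_lt hi0 (by omega)
  rw [hi]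
  ring_nf
end

section
/- For all integers s, i, t one has Δ_s(i, t) = δ(i, −s) − δ(t, −s); explicitly, Δ_s(i, t) = 0 if either both t̄ ≥ s̄ and ī ≥ s̄ or both t̄ < s̄ and ī < s̄, Δ_s(i, t) = 1 if t̄ < s̄ ≤ ī, and Δ_s(i, t) = −1 if ī < s̄ ≤ t̄. -/
/-- The Delta-3 function: `Δ_s(i, t) = δ(i, t−i) − δ(i−s, t−i)`. -/
def delta3 (n s i t : ℤ) : ℤ := carry n i (t - i) - carry n (i - s) (t - i)

lemma delta3_eq_carry_sub_carry (n s i t : ℤ) :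
    delta3 n s i t = carry n i (-s) - carry n t (-s) := by
  rcases eq_or_ne n 0 with rfl | hn
  · simp [delta3, carry]
  refine mul_left_cancel₀ hn ?_
  simp only [delta3, mul_sub, mul_carry]
  rw [show i + (t - i) = t by ring, show i - s + (t - i) = t - s by ring,
    show i + -s = i - s by ring, show t + -s = t - s by ring]
  ring

lemma carry_eq_ite {n : ℤ} (hn : 0 < n) (a b : ℤ) :
    carry n a b = if a % n + b % n < n then 0 else 1 := by
  have := Int.emod_nonneg a hn.ne'
  have := Int.emod_nonneg b hn.ne'
  have := Int.emod_lt_of_pos a hn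
  have := Int.emod_lt_of_pos b hn
  rw [carry, Int.add_emod a b n]
  split_ifs with h
  · rw [Int.emod_eq_of_lt (by omega) h, sub_self, Int.zero_ediv]
  · have hsub : (a % n + b % n - n) % n = a % n + b % n - n :=
      Int.emod_eq_of_lt (by omega) (by omega)
    rw [← Int.sub_emod_right (a % n + b % n) n, hsub, sub_sub_cancel, Int.ediv_self hn.ne']

lemma carry_neg_right_eq_ite {n : ℤ} (hn : 0 < n) (x s : ℤ) :
    carry n x (-s) = if s % n ≠ 0 ∧ s % n ≤ x % n then 1 else 0 := by
  have := Int.emod_lt_of_pos x hn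
  rw [carry_eq_ite hn, Int.neg_emod, Int.natAbs_of_nonneg hn.le]
  simp only [Int.dvd_iff_emod_eq_zero]
  split_ifs <;> omega

/-- `Δ_s(i, t) = δ(i, −s) − δ(t, −s)`; explicitly, `Δ_s(i, t) = 0` if either both
`t̄ ≥ s̄` and `ī ≥ s̄`, or both `t̄ < s̄` and `ī < s̄`; `Δ_s(i, t) = 1` if `t̄ < s̄ ≤ ī`;
and `Δ_s(i, t) = −1` if `ī < s̄ ≤ t̄`. -/
theorem stmt2 (n : ℤ) (hn : 2 ≤ n) (s i t : ℤ) :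
    delta3 n s i t = carry n i (-s) - carry n t (-s) ∧
    delta3 n s i t =
      (if (s % n ≤ t % n ∧ s % n ≤ i % n) ∨ (t % n < s % n ∧ i % n < s % n) then 0
       else if t % n < s % n ∧ s % n ≤ i % n then 1
       else -1) := by
  have hn0 : 0 < n := by omega
  refine ⟨delta3_eq_carry_sub_carry n s i t, ?_⟩
  have := Int.emod_nonneg s hn0.ne'
  have := Int.emod_nonneg i hn0.ne'
  have := Int.emod_nonneg t hn0.ne'
  rw [delta3_eq_carry_sub_carry, carry_neg_right_eq_ite hn0, carry_neg_right_eq_ite hn0]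
  split_ifs <;> omega
end

section
/- For all integers s, i, t, z one has the cocycle identity Δ_s(i, t) = Δ_s(i, z) + Δ_s(z, t). -/
lemma carry_mul (n η κ : ℤ) : n * carry n η κ = η % n + κ % n - (η + κ) % n := by
  have h : n ∣ (η % n + κ % n - (η + κ) % n) := by
    apply Int.dvd_of_emod_eq_zero
    simp [Int.sub_emod, Int.add_emod, Int.emod_emod_of_dvd _ dvd_rfl]
  exact Int.mul_ediv_cancel' h

/-- The cocycle identity `Δ_s(i, t) = Δ_s(i, z) + Δ_s(z, t)`. -/
theorem stmt4 (n : ℤ) (hn : 2 ≤ n) (s i t z : ℤ) :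
    delta3 n s i t = delta3 n s i z + delta3 n s z t := by
  have hn0 : n ≠ 0 := by omega
  apply mul_left_cancel₀ hn0
  simp only [delta3, mul_sub, mul_add, carry_mul]
  have e1 : i + (t - i) = t := by ring
  have e2 : i - s + (t - i) = t - s := by ring
  have e3 : i + (z - i) = z := by ring
  have e4 : i - s + (z - i) = z - s := by ring
  have e5 : z + (t - z) = t := by ring
  have e6 : z - s + (t - z) = t - s := by ring
  rw [e1, e2, e3, e4, e5, e6]
  ring
end

section
/- For all integers s, t one has ∑_{k=0}^{n−1} Δ_s(k, t) = n − s̄ if t̄ < s̄, and ∑_{k=0}^{n−1} Δ_s(k, t) = −s̄ if t̄ ≥ s̄. -/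
lemma add_self_emod (x n : ℤ) : (x + n) % n = x % n := by
  rw [Int.add_emod, Int.emod_self, add_zero, Int.emod_emod_of_dvd _ dvd_rfl]

lemma carry_congr (n a a' b b' : ℤ) (ha : a % n = a' % n) (hb : b % n = b' % n) :
    carry n a b = carry n a' b' := by
  unfold carry
  rw [Int.add_emod a b, Int.add_emod a' b', ha, hb]

lemma carry_eval (n : ℤ) (hn : 0 < n) (k t : ℤ) (hk0 : 0 ≤ k) (hkn : k < n) :
    carry n k (t - k) = if k ≤ t % n then 0 else 1 := by
  have hne : n ≠ 0 := by omega
  have ht0 : 0 ≤ t % n := Int.emod_nonneg t hne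
  have htn : t % n < n := Int.emod_lt_of_pos t hn
  have hkk : k % n = k := Int.emod_eq_of_lt hk0 hkn
  have hadd : k + (t - k) = t := by ring
  have hsub : (t - k) % n = (t % n - k) % n := by
    rw [Int.sub_emod, hkk]
  unfold carry
  rw [hkk, hadd, hsub]
  split_ifs with h
  · have : (t % n - k) % n = t % n - k := Int.emod_eq_of_lt (by omega) (by omega)
    rw [this]
    have : k + (t % n - k) - t % n = 0 := by ring
    rw [this, Int.zero_ediv]
  · have h1 : (t % n - k) % n = (t % n - k + n) % n := by
      exact (add_self_emod _ _).symm
    have h2 : (t % n - k + n) % n = t % n - k + n :=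
      Int.emod_eq_of_lt (by omega) (by omega)
    rw [h1, h2]
    have : k + (t % n - k + n) - t % n = n := by ring
    rw [this, Int.ediv_self hne]

lemma sum_ite_aux (N : ℕ) (M : ℤ) (h0 : 0 ≤ M) (h : M < (N : ℤ)) :
    ∑ k ∈ Finset.range N, (if (k : ℤ) ≤ M then (0:ℤ) else 1) = (N : ℤ) - (M + 1) := by
  induction N with
  | zero => simp at h; omega
  | succ N ih =>
    rw [Finset.sum_range_succ]
    by_cases hM : M < (N : ℤ)
    · rw [ih hM, if_neg (by push_cast; omega)]
      push_cast; ring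
    · have hNM : (N : ℤ) ≤ M := by omega
      have : ∀ k ∈ Finset.range N, (if (k : ℤ) ≤ M then (0:ℤ) else 1) = 0 := by
        intro k hk
        rw [if_pos]
        have : k < N := Finset.mem_range.mp hk
        have : (k : ℤ) < (N : ℤ) := by exact_mod_cast this
        omega
      rw [Finset.sum_congr rfl this, Finset.sum_const, if_pos hNM]
      have : M = (N : ℤ) := by push_cast at h; omega
      simp [this]

lemma sum_carry (n : ℤ) (hn : 0 < n) (t : ℤ) :
    ∑ k ∈ Finset.range n.toNat, carry n (k : ℤ) (t - k) = n - 1 - t % n := by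
  have hne : n ≠ 0 := by omega
  have ht0 : 0 ≤ t % n := Int.emod_nonneg t hne
  have htn : t % n < n := Int.emod_lt_of_pos t hn
  have hcast : ((n.toNat : ℤ)) = n := Int.toNat_of_nonneg (by omega)
  have step : ∀ k ∈ Finset.range n.toNat,
      carry n (k : ℤ) (t - k) = (if (k : ℤ) ≤ t % n then (0:ℤ) else 1) := by
    intro k hk
    have hkN : k < n.toNat := Finset.mem_range.mp hk
    have : (k : ℤ) < n := by omega
    exact carry_eval n hn k t (by positivity) this
  rw [Finset.sum_congr rfl step, sum_ite_aux n.toNat (t % n) ht0 (by omega)]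
  omega

lemma sum_shift (n : ℤ) (hn : 0 < n) (f : ℤ → ℤ)
    (hf : ∀ a b : ℤ, a % n = b % n → f a = f b) (s : ℤ) :
    ∑ k ∈ Finset.range n.toNat, f ((k : ℤ) - s) = ∑ k ∈ Finset.range n.toNat, f (k : ℤ) := by
  have hne : n ≠ 0 := by omega
  refine Finset.sum_nbij' (f := fun k : ℕ => f ((k : ℤ) - s)) (g := fun k : ℕ => f (k : ℤ))
    (fun k => (((k : ℤ) - s) % n).toNat) (fun k => (((k : ℤ) + s) % n).toNat) ?_ ?_ ?_ ?_ ?_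
  · intro a ha
    have h0 : 0 ≤ ((a : ℤ) - s) % n := Int.emod_nonneg _ hne
    have h1 : ((a : ℤ) - s) % n < n := Int.emod_lt_of_pos _ hn
    simp only [Finset.mem_range] at *
    omega
  · intro a ha
    have h0 : 0 ≤ ((a : ℤ) + s) % n := Int.emod_nonneg _ hne
    have h1 : ((a : ℤ) + s) % n < n := Int.emod_lt_of_pos _ hn
    simp only [Finset.mem_range] at *
    omega
  · intro a ha
    have hkN : a < n.toNat := Finset.mem_range.mp ha
    have h0 : 0 ≤ ((a : ℤ) - s) % n := Int.emod_nonneg _ hne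
    have hc : ((((a : ℤ) - s) % n).toNat : ℤ) = ((a : ℤ) - s) % n := Int.toNat_of_nonneg h0
    have : ((((a : ℤ) - s) % n) + s) % n = ((a : ℤ) - s + s) % n := by
      rw [Int.add_emod, Int.emod_emod_of_dvd _ dvd_rfl, ← Int.add_emod]
    have h2 : ((((a : ℤ) - s) % n) + s) % n = (a : ℤ) := by
      rw [this]
      have : (a : ℤ) - s + s = (a : ℤ) := by ring
      rw [this]
      exact Int.emod_eq_of_lt (by positivity) (by omega)
    simp only [hc]
    omega
  · intro a ha
    have hkN : a < n.toNat := Finset.mem_range.mp ha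
    have h0 : 0 ≤ ((a : ℤ) + s) % n := Int.emod_nonneg _ hne
    have hc : ((((a : ℤ) + s) % n).toNat : ℤ) = ((a : ℤ) + s) % n := Int.toNat_of_nonneg h0
    have : ((((a : ℤ) + s) % n) - s) % n = ((a : ℤ) + s - s) % n := by
      rw [Int.sub_emod, Int.emod_emod_of_dvd _ dvd_rfl, ← Int.sub_emod]
    have h2 : ((((a : ℤ) + s) % n) - s) % n = (a : ℤ) := by
      rw [this]
      have : (a : ℤ) + s - s = (a : ℤ) := by ring
      rw [this]
      exact Int.emod_eq_of_lt (by positivity) (by omega)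
    simp only [hc]
    omega
  · intro a ha
    have h0 : 0 ≤ ((a : ℤ) - s) % n := Int.emod_nonneg _ hne
    have hc : ((((a : ℤ) - s) % n).toNat : ℤ) = ((a : ℤ) - s) % n := Int.toNat_of_nonneg h0
    apply hf
    rw [hc, Int.emod_emod_of_dvd _ dvd_rfl]

/-- `∑_{k=0}^{n−1} Δ_s(k, t) = n − s̄` if `t̄ < s̄`, and `= −s̄` if `t̄ ≥ s̄`. -/
theorem stmt6 (n : ℤ) (hn : 2 ≤ n) (s t : ℤ) :
    ∑ k ∈ Finset.range n.toNat, delta3 n s (k : ℤ) t =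
      if t % n < s % n then n - s % n else -(s % n) := by
  have hn0 : 0 < n := by omega
  have hne : n ≠ 0 := by omega
  unfold delta3
  rw [Finset.sum_sub_distrib]
  have h1 : ∑ k ∈ Finset.range n.toNat, carry n (k : ℤ) (t - k) = n - 1 - t % n :=
    sum_carry n hn0 t
  set f : ℤ → ℤ := fun j => carry n j ((t - s) - j) with hfdef
  have hf : ∀ a b : ℤ, a % n = b % n → f a = f b := by
    intro a b hab
    apply carry_congr _ _ _ _ _ hab
    rw [Int.sub_emod, hab, ← Int.sub_emod]
  have h2 : ∑ k ∈ Finset.range n.toNat, carry n ((k : ℤ) - s) (t - k)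
      = ∑ k ∈ Finset.range n.toNat, f ((k : ℤ) - s) := by
    apply Finset.sum_congr rfl
    intro k _
    show carry n ((k : ℤ) - s) (t - k) = carry n ((k : ℤ) - s) ((t - s) - ((k : ℤ) - s))
    congr 1
    ring
  have h3 : ∑ k ∈ Finset.range n.toNat, f ((k : ℤ) - s) = n - 1 - (t - s) % n := by
    rw [sum_shift n hn0 f hf s]
    exact sum_carry n hn0 (t - s)
  rw [h1, h2, h3]
  have ht0 : 0 ≤ t % n := Int.emod_nonneg t hne
  have htn : t % n < n := Int.emod_lt_of_pos t hn0
  have hs0 : 0 ≤ s % n := Int.emod_nonneg s hne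
  have hsn : s % n < n := Int.emod_lt_of_pos s hn0
  have hts : (t - s) % n = (t % n - s % n) % n := Int.sub_emod t s n
  by_cases h : t % n < s % n
  · have : (t % n - s % n) % n = (t % n - s % n + n) % n := by exact (add_self_emod _ _).symm
    have h4 : (t - s) % n = t % n - s % n + n := by
      rw [hts, this]
      exact Int.emod_eq_of_lt (by omega) (by omega)
    rw [if_pos h, h4]
    ring
  · have h4 : (t - s) % n = t % n - s % n := by
      rw [hts]
      exact Int.emod_eq_of_lt (by omega) (by omega)
    rw [if_neg h, h4]
    ring
end

section
/- Let G be a group and let g, t ∈ G be such that ⁅g, t⁻ᵏ g tᵏ⁆ = 1 for all k ∈ ℤ. Then the subgroup of G generated by the set { ⁅g, tᵏ⁆ : k ∈ ℤ } is commutative. -/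
/-- The paper's commutator convention: `⁅x, y⁆ = x⁻¹ y⁻¹ x y`. -/
def pc {G : Type*} [Group G] (x y : G) : G := x⁻¹ * y⁻¹ * x * y

/-!
Write `aₖ = t⁻ᵏ g tᵏ`, so that `⁅g, tᵏ⁆ = a₀⁻¹ aₖ`. The hypothesis says that `a₀ = g` commutes
with every `aₖ`; conjugating by `tⁱ` shows that `aᵢ` commutes with every `aⱼ`. Hence all the
generators `⁅g, tᵏ⁆` lie in the abelian subgroup generated by the `aₖ`.
-/

section

variable {G : Type*} [Group G]

theorem pc_eq_one_iff_commute {x y : G} : pc x y = 1 ↔ Commute x y := by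
  have : pc x y = (y * x)⁻¹ * (x * y) := by simp only [pc, mul_inv_rev, mul_assoc]
  rw [this, inv_mul_eq_one, eq_comm]
  rfl

theorem pc_eq_inv_mul_conj (x y : G) : pc x y = x⁻¹ * (y⁻¹ * x * y) := by
  simp only [pc, mul_assoc]

theorem commute_zpow_conj_of_forall_commute {g t : G}
    (h : ∀ k : ℤ, Commute g ((t ^ k)⁻¹ * g * t ^ k)) (i j : ℤ) :
    Commute ((t ^ i)⁻¹ * g * t ^ i) ((t ^ j)⁻¹ * g * t ^ j) := by
  convert (h (j - i)).conj (t ^ i)⁻¹ using 1 <;> group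

end

/-- If `g, t ∈ G` satisfy `⁅g, t⁻ᵏ g tᵏ⁆ = 1` for all `k ∈ ℤ`, then the subgroup
generated by `{ ⁅g, tᵏ⁆ : k ∈ ℤ }` is commutative. -/
theorem stmt8 {G : Type*} [Group G] (g t : G)
    (h : ∀ k : ℤ, pc g ((t ^ k)⁻¹ * g * t ^ k) = 1) :
    ∀ x ∈ Subgroup.closure {x : G | ∃ k : ℤ, x = pc g (t ^ k)},
      ∀ y ∈ Subgroup.closure {x : G | ∃ k : ℤ, x = pc g (t ^ k)},
        x * y = y * x := by
  let a : ℤ → G := fun k ↦ (t ^ k)⁻¹ * g * t ^ k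
  have ha : ∀ i j, Commute (a i) (a j) :=
    commute_zpow_conj_of_forall_commute fun k ↦ pc_eq_one_iff_commute.mp (h k)
  have hcomm := Subgroup.isMulCommutative_closure (k := Set.range a) <| by
    rintro _ ⟨i, rfl⟩ _ ⟨j, rfl⟩
    exact ha i j
  have hle : Subgroup.closure {x : G | ∃ k : ℤ, x = pc g (t ^ k)} ≤
      Subgroup.closure (Set.range a) := by
    rw [Subgroup.closure_le]
    rintro _ ⟨k, rfl⟩
    rw [show pc g (t ^ k) = (a 0)⁻¹ * a k by simp [a, pc_eq_inv_mul_conj]]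
    exact mul_mem (inv_mem (Subgroup.subset_closure ⟨0, rfl⟩)) (Subgroup.subset_closure ⟨k, rfl⟩)
  intro x hx y hy
  exact setLike_mul_comm (hle hx) (hle hy)
end

section
/- Let p be a prime and k ≥ 1, and let σ be the regular p^k-cycle on ZMod (p^k) given by σ(i) = i + 1. Then there exists a unique Sylow p-subgroup P of the symmetric group Perm(ZMod (p^k)) with σ ∈ P. -/
/-!
Write `σ` for translation by `1` on `ZMod (p ^ (k + 1))` and `z = σ ^ p ^ k` for translation by
`p ^ k`. Let `P` be a `p`-subgroup containing `σ`. A nontrivial element `τ` of the centre of `P`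
commutes with `σ`, so it is a translation, and `z` is a power of `τ` because `p ^ k` lies in every
nonzero ideal of `ZMod (p ^ (k + 1))`; hence `P` centralises `z`. The centraliser `C` of `z`
permutes the fibres of the reduction `ZMod (p ^ (k + 1)) → ZMod (p ^ k)`, which gives a
surjection `C → Perm (ZMod (p ^ k))` sending `σ` to translation by `1`. Its kernel acts by a
translation on each fibre, so it is a normal `p`-subgroup of `C` and lies in every Sylow subgroup
of `C`: Sylow subgroups of `C` are determined by their images, and uniqueness follows by induction
on `k`.
-/

open Equiv Subgroup

theorem Sylow.exists_mem_of_pow_prime_pow_eq_one {p e : ℕ} {G : Type*} [Group G] {g : G}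
    (hg : g ^ p ^ e = 1) : ∃ P : Sylow p G, g ∈ P := by
  have hpg : IsPGroup p (zpowers g) := by
    rintro ⟨_, i, rfl⟩
    refine ⟨e, Subtype.ext ?_⟩
    simp only [SubgroupClass.coe_pow, OneMemClass.coe_one]
    rw [← zpow_natCast, ← zpow_mul, mul_comm, zpow_mul, zpow_natCast, hg, one_zpow]
  obtain ⟨P, hP⟩ := hpg.exists_le_sylow
  exact ⟨P, hP (mem_zpowers g)⟩

theorem Sylow.mapSurjective_injective {p : ℕ} [Fact p.Prime] {G G' : Type*} [Group G] [Group G']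
    [Finite G] {f : G →* G'} (hf : Function.Surjective f) (hker : IsPGroup p f.ker) :
    Function.Injective (Sylow.mapSurjective hf : Sylow p G → Sylow p G') := by
  intro P Q hPQ
  have := congrArg (fun S : Sylow p G' => comap f (S : Subgroup G')) hPQ
  simp only [coe_mapSurjective, comap_map_eq] at this
  rwa [sup_of_le_left (hker.le_sylow_of_normal P), sup_of_le_left (hker.le_sylow_of_normal Q),
    ← Sylow.ext_iff] at this

theorem Equiv.Perm.eq_addRight_of_commute_addRight_one {n : ℕ} {π : Perm (ZMod n)}
    (h : Commute π (Equiv.addRight 1)) : π = Equiv.addRight (π 0) := by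
  ext x
  obtain ⟨t, rfl⟩ := ZMod.intCast_surjective x
  have := congrArg (· 0) (h.zpow_right t).eq
  simpa [zsmul_addRight, Perm.mul_apply, add_comm] using this

namespace ZMod

theorem exists_zsmul_eq_prime_pow_of_ne_zero {p k : ℕ} (hp : p.Prime)
    {u : ZMod (p ^ (k + 1))} (hu : u ≠ 0) : ∃ c : ℤ, c • u = ((p ^ k : ℕ) : ZMod (p ^ (k + 1))) := by
  have : NeZero (p ^ (k + 1)) := ⟨pow_ne_zero _ hp.ne_zero⟩
  obtain ⟨j, hj, hgcd⟩ := (Nat.dvd_prime_pow hp).mp (Nat.gcd_dvd_right u.val (p ^ (k + 1)))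
  have hjk : j ≤ k := by
    refine Nat.lt_succ_iff.mp (hj.lt_of_ne ?_)
    rintro rfl
    apply hu
    rw [← natCast_zmod_val u, natCast_eq_zero_iff]
    simpa only [hgcd] using Nat.gcd_dvd_left u.val (p ^ (k + 1))
  have hbezout : (p : ZMod (p ^ (k + 1))) ^ j = u.val.gcdA (p ^ (k + 1)) * u := by
    have := congrArg (Int.cast : ℤ → ZMod (p ^ (k + 1))) (Nat.gcd_eq_gcd_ab u.val (p ^ (k + 1)))
    rw [Int.cast_natCast, hgcd, Nat.cast_pow] at this
    have hchar : (p : ZMod (p ^ (k + 1))) ^ (k + 1) = 0 := by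
      exact_mod_cast natCast_self (p ^ (k + 1))
    push_cast [natCast_zmod_val, hchar] at this
    rw [this, zero_mul, add_zero, mul_comm]
  refine ⟨p ^ (k - j) * u.val.gcdA (p ^ (k + 1)), ?_⟩
  push_cast
  rw [zsmul_eq_mul, Int.cast_mul, Int.cast_pow, Int.cast_natCast, mul_assoc, ← hbezout, ← pow_add,
    Nat.sub_add_cancel hjk]

variable {m n : ℕ}

abbrev centralizerAddRight (m n : ℕ) : Subgroup (Perm (ZMod m)) :=
  centralizer {Equiv.addRight (n : ZMod m)}

theorem addRight_mem_centralizerAddRight (c : ZMod m) :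
    Equiv.addRight c ∈ centralizerAddRight m n := by
  rw [mem_centralizer_singleton_iff]
  ext x
  simp [Perm.mul_apply, add_right_comm]

theorem apply_add_of_mem_centralizerAddRight (h : n ∣ m) {π : Perm (ZMod m)}
    (hπ : π ∈ centralizerAddRight m n) (x : ZMod m) {c : ZMod m}
    (hc : castHom h (ZMod n) c = 0) : π (x + c) = π x + c := by
  obtain ⟨t, rfl⟩ := intCast_surjective c
  rw [map_intCast, intCast_zmod_eq_zero_iff_dvd] at hc
  obtain ⟨s, rfl⟩ := hc
  have hcomm : Commute π (Equiv.addRight (n : ZMod m)) := mem_centralizer_singleton_iff.mp hπ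
  have := congrArg (· x) (hcomm.zpow_right s).eq
  simpa [zsmul_addRight, Perm.mul_apply, mul_comm] using this

theorem le_centralizerAddRight_of_isPGroup {p k : ℕ} [hp : Fact p.Prime]
    {P : Subgroup (Perm (ZMod (p ^ (k + 1))))} [Finite P] (hP : IsPGroup p P)
    (hσ : Equiv.addRight 1 ∈ P) : P ≤ centralizerAddRight (p ^ (k + 1)) (p ^ k) := by
  have : Fact (1 < p ^ (k + 1)) := ⟨Nat.one_lt_pow k.succ_ne_zero hp.out.one_lt⟩
  have : Nontrivial P := ⟨⟨⟨_, hσ⟩, 1, fun h => one_ne_zero (α := ZMod (p ^ (k + 1))) <| by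
    simpa using congrArg (fun g : P => g.1 0) h⟩⟩
  have := hP.center_nontrivial
  obtain ⟨τ, hτ⟩ := exists_ne (1 : center P)
  have hcomm (ρ : Perm _) (hρ : ρ ∈ P) : Commute τ.1.1 ρ :=
    congrArg Subtype.val (mem_center_iff.mp τ.2 ⟨ρ, hρ⟩).symm
  have hτ_eq := Perm.eq_addRight_of_commute_addRight_one (hcomm _ hσ)
  have hτ0 : τ.1.1 0 ≠ 0 := fun h0 =>
    hτ (Subtype.ext (Subtype.ext (by rw [hτ_eq, h0]; exact Equiv.addRight_zero)))
  obtain ⟨c, hc⟩ := exists_zsmul_eq_prime_pow_of_ne_zero hp.out hτ0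
  intro ρ hρ
  rw [mem_centralizer_singleton_iff, ← hc, ← zsmul_addRight, ← hτ_eq]
  exact ((hcomm ρ hρ).zpow_left c).eq.symm

section Reduction

variable (h : n ∣ m)

local notation "ρ" => castHom h (ZMod n)
local notation "ι" => Function.surjInv (castHom_surjective h)

theorem castHom_apply_eq_of_mem_centralizerAddRight {π : Perm (ZMod m)}
    (hπ : π ∈ centralizerAddRight m n) {x y : ZMod m} (hxy : ρ x = ρ y) : ρ (π x) = ρ (π y) := by
  have hc : ρ (y - x) = 0 := by rw [map_sub, hxy, sub_self]
  rw [← add_sub_cancel x y, apply_add_of_mem_centralizerAddRight h hπ x hc, map_add, hc, add_zero]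

noncomputable def reduceEnd : centralizerAddRight m n →* Function.End (ZMod n) where
  toFun π a := ρ (π.1 (ι a))
  map_one' := funext (Function.surjInv_eq _)
  map_mul' π _ := funext fun _ =>
    castHom_apply_eq_of_mem_centralizerAddRight h π.2 (Function.surjInv_eq _ _).symm

/-- The action of the centraliser of translation by `n` on the cosets of `n • ZMod m`. -/
noncomputable def reducePerm : centralizerAddRight m n →* Perm (ZMod n) :=
  Perm.equivUnitsEnd.symm.toMonoidHom.comp (reduceEnd h).toHomUnits

theorem reducePerm_castHom (π : centralizerAddRight m n) (x : ZMod m) :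
    reducePerm h π (ρ x) = ρ (π.1 x) :=
  castHom_apply_eq_of_mem_centralizerAddRight h π.2 (Function.surjInv_eq _ _)

theorem reducePerm_addRight (c : ZMod m) :
    reducePerm h ⟨Equiv.addRight c, addRight_mem_centralizerAddRight c⟩ =
      Equiv.addRight (ρ c) := by
  ext a
  obtain ⟨x, rfl⟩ := castHom_surjective h a
  exact (reducePerm_castHom h _ x).trans (map_add _ x c)

/-- Lifts `τ` by moving each coset `x + n • ZMod m` onto the coset over `τ (ρ x)`, keeping the
offset of `x` from the chosen representative. -/
noncomputable def liftFun (τ : ZMod n → ZMod n) (x : ZMod m) : ZMod m :=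
  ι (τ (ρ x)) + (x - ι (ρ x))

theorem castHom_liftFun (τ : ZMod n → ZMod n) (x : ZMod m) : ρ (liftFun h τ x) = τ (ρ x) := by
  simp only [liftFun, map_add, map_sub, Function.surjInv_eq, sub_self, add_zero]

theorem liftFun_liftFun (τ₁ τ₂ : ZMod n → ZMod n) (x : ZMod m) :
    liftFun h τ₁ (liftFun h τ₂ x) = liftFun h (τ₁ ∘ τ₂) x := by
  rw [liftFun, castHom_liftFun, liftFun, liftFun, Function.comp_apply]
  abel

theorem liftFun_id (x : ZMod m) : liftFun h id x = x := by
  simp [liftFun]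

noncomputable def liftPerm (τ : Perm (ZMod n)) : Perm (ZMod m) where
  toFun := liftFun h τ
  invFun := liftFun h τ.symm
  left_inv x := by simp [liftFun_liftFun, liftFun_id]
  right_inv x := by simp [liftFun_liftFun, liftFun_id]

theorem liftPerm_mem_centralizerAddRight (τ : Perm (ZMod n)) :
    liftPerm h τ ∈ centralizerAddRight m n := by
  rw [mem_centralizer_singleton_iff]
  ext x
  have hn : ρ (x + n) = ρ x := by rw [map_add, map_natCast, natCast_self, add_zero]
  simp only [Perm.mul_apply, liftPerm, coe_fn_mk, coe_addRight, liftFun, hn]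
  abel

theorem reducePerm_surjective : Function.Surjective (reducePerm h) := by
  intro τ
  refine ⟨⟨liftPerm h τ, liftPerm_mem_centralizerAddRight h τ⟩, ?_⟩
  ext a
  obtain ⟨x, rfl⟩ := castHom_surjective h a
  exact (reducePerm_castHom h _ x).trans (castHom_liftFun h τ x)

theorem pow_eq_one_of_mem_ker_reducePerm {π : centralizerAddRight m n}
    (hπ : π ∈ (reducePerm h).ker) : π ^ m = 1 := by
  have hfix (x : ZMod m) : ρ (π.1 x - x) = 0 := by
    rw [map_sub, ← reducePerm_castHom, MonoidHom.mem_ker.mp hπ, Perm.one_apply, sub_self]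
  have hpow (x : ZMod m) (j : ℕ) : (π.1 ^ j) x = x + j • (π.1 x - x) := by
    induction j with
    | zero => simp
    | succ j ih =>
      have hc : ρ (j • (π.1 x - x)) = 0 := by rw [map_nsmul, hfix, nsmul_zero]
      rw [pow_succ', Perm.mul_apply, ih, apply_add_of_mem_centralizerAddRight h π.2 x hc,
        succ_nsmul]
      abel
  ext x
  rw [coe_pow, hpow, nsmul_eq_mul, natCast_self, zero_mul, add_zero, coe_one, Perm.one_apply]

end Reduction

theorem isPGroup_ker_reducePerm {p e n : ℕ} (h : n ∣ p ^ e) : IsPGroup p (reducePerm h).ker :=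
  fun π => ⟨e, Subtype.ext (pow_eq_one_of_mem_ker_reducePerm h π.2)⟩

theorem sylow_eq_of_addRight_one_mem_succ {p k : ℕ} [Fact p.Prime]
    (ih : ∀ P Q : Sylow p (Perm (ZMod (p ^ k))),
      Equiv.addRight 1 ∈ P → Equiv.addRight 1 ∈ Q → P = Q)
    (P Q : Sylow p (Perm (ZMod (p ^ (k + 1)))))
    (hP : Equiv.addRight 1 ∈ P) (hQ : Equiv.addRight 1 ∈ Q) : P = Q := by
  have h : p ^ k ∣ p ^ (k + 1) := pow_dvd_pow p k.le_succ
  have hPC := le_centralizerAddRight_of_isPGroup P.isPGroup' hP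
  have hQC := le_centralizerAddRight_of_isPGroup Q.isPGroup' hQ
  have hmem (R : Sylow p (Perm (ZMod (p ^ (k + 1))))) (hR : Equiv.addRight 1 ∈ R)
      (hRC : (R : Subgroup _) ≤ centralizerAddRight (p ^ (k + 1)) (p ^ k)) :
      Equiv.addRight 1 ∈ (R.subtype hRC).mapSurjective (reducePerm_surjective h) := by
    refine ⟨⟨_, addRight_mem_centralizerAddRight 1⟩, mem_subgroupOf.mpr hR, ?_⟩
    rw [reducePerm_addRight, map_one]
  refine Sylow.subtype_injective (hP := hPC) (hQ := hQC) ?_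
  exact Sylow.mapSurjective_injective _ (isPGroup_ker_reducePerm h)
    (ih _ _ (hmem P hP hPC) (hmem Q hQ hQC))

theorem sylow_eq_of_addRight_one_mem {p : ℕ} [Fact p.Prime] (k : ℕ)
    (P Q : Sylow p (Perm (ZMod (p ^ k)))) (hP : Equiv.addRight 1 ∈ P)
    (hQ : Equiv.addRight 1 ∈ Q) : P = Q := by
  induction k with
  | zero =>
    have : Subsingleton (ZMod (p ^ 0)) := by rw [pow_zero]; infer_instance
    exact Sylow.ext (Subsingleton.elim _ _)
  | succ k ih => exact sylow_eq_of_addRight_one_mem_succ ih P Q hP hQ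

end ZMod

theorem stmt9_general (p k : ℕ) (hp : p.Prime) :
    ∃! P : Sylow p (Equiv.Perm (ZMod (p ^ k))),
      Equiv.addRight (1 : ZMod (p ^ k)) ∈ P := by
  have : Fact p.Prime := ⟨hp⟩
  have hσ : Equiv.addRight (1 : ZMod (p ^ k)) ^ p ^ k = 1 := by
    rw [Equiv.nsmul_addRight, nsmul_one, ZMod.natCast_self, Equiv.addRight_zero]
  obtain ⟨P, hP⟩ := Sylow.exists_mem_of_pow_prime_pow_eq_one hσ
  exact ⟨P, hP, fun Q hQ => ZMod.sylow_eq_of_addRight_one_mem k Q P hQ hP⟩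

/-- Let `p` be a prime and `k ≥ 1`, and let `σ` be the regular `p^k`-cycle on
`ZMod (p^k)` given by `σ(i) = i + 1`.  Then there is a unique Sylow `p`-subgroup of
the symmetric group `Perm (ZMod (p^k))` containing `σ`. -/
theorem stmt9 (p k : ℕ) (hp : p.Prime) (hk : 1 ≤ k) :
    ∃! P : Sylow p (Equiv.Perm (ZMod (p ^ k))),
      Equiv.addRight (1 : ZMod (p ^ k)) ∈ P :=
  stmt9_general p k hp
end

section
/- Let p be a prime and k ≥ 1, and let σ be the regular p^k-cycle on ZMod (p^k) given by σ(i) = i + 1. If W is an abelian subgroup of Perm(ZMod (p^k)) normalized by σ (that is, σ⁻¹ W σ = W), then there is a Sylow p-subgroup of Perm(ZMod (p^k)) containing both σ and W; in particular W is a p-group. -/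
/-!
The elements of `W` of order prime to `p` form a subgroup `N` (as `W` is abelian), and `σ`
still normalises `N`. Since `⟨σ⟩` is transitive on `ZMod (p ^ k)` and normalises `N`, the
`N`-orbits are blocks of `⟨σ⟩`, so their size divides `p ^ k`; it also divides `|N|`, which is
prime to `p`. Hence `N` fixes every point, so `N = 1` and `W` is a `p`-group. As `σ` normalises
`W`, the subgroup `⟨σ⟩ ⊔ W` is a `p`-group too, and any Sylow subgroup containing it will do.
-/

open MulAction Subgroup Pointwise

namespace MulAction

variable {G X : Type*} [Group G] [MulAction G X]

theorem smul_orbit_eq_orbit_smul_of_mem_normalizer {N : Subgroup G} {g : G}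
    (hg : g ∈ normalizer (N : Set G)) (a : X) : g • orbit N a = orbit N (g • a) := by
  ext x
  rw [Set.mem_smul_set_iff_inv_smul_mem]
  constructor
  · rintro ⟨⟨n, hn⟩, hx⟩
    refine ⟨⟨g * n * g⁻¹, (mem_normalizer_iff.mp hg n).mp hn⟩, ?_⟩
    simp only [Subgroup.mk_smul, mul_smul, inv_smul_smul] at hx ⊢
    rw [hx, smul_inv_smul]
  · rintro ⟨⟨n, hn⟩, rfl⟩
    refine ⟨⟨g⁻¹ * n * g, (mem_normalizer_iff''.mp hg n).mp hn⟩, ?_⟩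
    simp only [Subgroup.mk_smul, mul_smul]

theorem IsBlock.orbit_of_le_normalizer {H N : Subgroup G} (hH : H ≤ normalizer (N : Set G))
    (a : X) : IsBlock H (orbit N a) := by
  rw [isBlock_iff_smul_eq_or_disjoint]
  intro h
  exact smul_orbit_eq_orbit_smul_of_mem_normalizer (hH h.2) a ▸ orbit.eq_or_disjoint _ _

theorem eq_bot_of_le_normalizer_of_coprime [FaithfulSMul G X] {H N : Subgroup G}
    [IsPretransitive H X] (hH : H ≤ normalizer (N : Set G))
    (hN : (Nat.card N).Coprime (Nat.card X)) : N = ⊥ := by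
  have hfix (n : N) (a : X) : n • a = a := by
    have hcard : (orbit N a).ncard = 1 :=
      Nat.eq_one_of_dvd_coprimes hN (index_stabilizer N a ▸ (stabilizer N a).index_dvd_card)
        ((IsBlock.orbit_of_le_normalizer hH a).ncard_dvd_card ⟨a, mem_orbit_self a⟩)
    obtain ⟨b, hb⟩ := Set.ncard_eq_one.mp hcard
    have ha : a ∈ orbit N a := mem_orbit_self a
    have hna : n • a ∈ orbit N a := mem_orbit a n
    rw [hb] at ha hna
    exact hna.trans ha.symm
  rw [eq_bot_iff]
  exact fun n hn ↦ eq_of_smul_eq_smul fun a ↦ (hfix ⟨n, hn⟩ a).trans (one_smul G a).symm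

end MulAction

namespace Subgroup

variable {G : Type*} [Group G] (p : ℕ)

def pPrimePart (W : Subgroup G) (hW : ∀ x ∈ W, ∀ y ∈ W, Commute x y) : Subgroup G where
  carrier := {w | w ∈ W ∧ (orderOf w).Coprime p}
  one_mem' := ⟨W.one_mem, by simp⟩
  mul_mem' := fun ⟨ha, ha'⟩ ⟨hb, hb'⟩ ↦ ⟨W.mul_mem ha hb,
    (ha'.mul_left hb').coprime_dvd_left (hW _ ha _ hb).orderOf_mul_dvd_mul_orderOf⟩
  inv_mem' := fun ⟨ha, ha'⟩ ↦ ⟨W.inv_mem ha, by rwa [orderOf_inv]⟩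

variable {W : Subgroup G} (hW : ∀ x ∈ W, ∀ y ∈ W, Commute x y)

theorem normalizer_le_normalizer_pPrimePart :
    normalizer (W : Set G) ≤ normalizer (W.pPrimePart p hW : Set G) :=
  fun g hg ↦ mem_normalizer_iff.mpr fun h ↦ and_congr (mem_normalizer_iff.mp hg h)
    (by rw [(SemiconjBy.conj_mk g h).orderOf_eq] : (orderOf h).Coprime p ↔ _)

variable [Finite G] [Fact p.Prime]

theorem coprime_card_pPrimePart : (Nat.card (W.pPrimePart p hW)).Coprime p := by
  refine ((Fact.out : p.Prime).coprime_iff_not_dvd.mpr fun hdvd ↦ ?_).symm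
  obtain ⟨w, hw⟩ := exists_prime_orderOf_dvd_card' p hdvd
  have hcop := w.2.2
  rw [Subgroup.orderOf_coe, hw, Nat.coprime_self] at hcop
  exact (Fact.out : p.Prime).one_lt.ne' hcop

theorem isPGroup_of_pPrimePart_eq_bot (h : W.pPrimePart p hW = ⊥) : IsPGroup p W := by
  have hp : p.Prime := Fact.out
  intro w
  set m := orderOf (w : G)
  have hm : m ≠ 0 := (orderOf_pos (w : G)).ne'
  refine ⟨m.factorization p, Subtype.ext ?_⟩
  have hmem : (w : G) ^ p ^ m.factorization p ∈ W.pPrimePart p hW := by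
    refine ⟨W.pow_mem w.2 _, ?_⟩
    rw [orderOf_pow_of_dvd (pow_ne_zero _ hp.ne_zero) (Nat.ordProj_dvd m p)]
    exact (Nat.coprime_ordCompl hp hm).symm
  simpa [h] using hmem

end Subgroup

section Cycle

variable (n : ℕ)

theorem orderOf_addRight_one : orderOf (Equiv.addRight (1 : ZMod n)) = n := by
  refine .trans (orderOf_eq_orderOf_iff.mpr fun m ↦ ?_)
    ((orderOf_ofAdd_eq_addOrderOf 1).trans (ZMod.addOrderOf_one n))
  rw [Equiv.nsmul_addRight, ← ofAdd_nsmul, ofAdd_eq_one, Equiv.Perm.ext_iff]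
  simp

instance isPretransitive_zpowers_addRight_one :
    IsPretransitive (zpowers (Equiv.addRight (1 : ZMod n))) (ZMod n) := by
  refine ⟨fun x y ↦ ?_⟩
  obtain ⟨m, hm⟩ := ZMod.intCast_surjective (y - x)
  refine ⟨⟨_, zpow_mem_zpowers _ m⟩, ?_⟩
  simp [Subgroup.mk_smul, hm]

end Cycle

theorem stmt10_general (p k : ℕ) (hp : p.Prime)
    (W : Subgroup (Equiv.Perm (ZMod (p ^ k))))
    (hcomm : ∀ x ∈ W, ∀ y ∈ W, x * y = y * x)
    (hnorm : ∀ w : Equiv.Perm (ZMod (p ^ k)),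
      w ∈ W ↔ (Equiv.addRight (1 : ZMod (p ^ k)))⁻¹ * w *
        Equiv.addRight (1 : ZMod (p ^ k)) ∈ W) :
    (∃ P : Sylow p (Equiv.Perm (ZMod (p ^ k))),
      Equiv.addRight (1 : ZMod (p ^ k)) ∈ P ∧
        W ≤ (P : Subgroup (Equiv.Perm (ZMod (p ^ k))))) ∧
    IsPGroup p W := by
  have : Fact p.Prime := ⟨hp⟩
  have : NeZero (p ^ k) := ⟨pow_ne_zero k hp.ne_zero⟩
  set σ := Equiv.addRight (1 : ZMod (p ^ k))
  have hσW : zpowers σ ≤ normalizer (W : Set (Equiv.Perm (ZMod (p ^ k)))) :=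
    zpowers_le.mpr (mem_normalizer_iff''.mpr hnorm)
  have hWp : IsPGroup p W := by
    refine isPGroup_of_pPrimePart_eq_bot p hcomm (eq_bot_of_le_normalizer_of_coprime
      (X := ZMod (p ^ k)) (hσW.trans (normalizer_le_normalizer_pPrimePart p hcomm)) ?_)
    rw [Nat.card_zmod]
    exact (coprime_card_pPrimePart p hcomm).pow_right k
  have hσp : IsPGroup p (zpowers σ) := .of_card (by rw [Nat.card_zpowers, orderOf_addRight_one])
  obtain ⟨P, hP⟩ := (hσp.to_sup_of_normal_right' hWp hσW).exists_le_sylow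
  exact ⟨⟨P, hP (mem_sup_left (mem_zpowers σ)), le_sup_right.trans hP⟩, hWp⟩

/-- Let `p` be a prime, `k ≥ 1`, and let `σ` be the regular `p^k`-cycle on `ZMod (p^k)`
given by `σ(i) = i + 1`.  If `W` is an abelian subgroup of `Perm (ZMod (p^k))` normalized
by `σ` (i.e. `σ⁻¹ W σ = W`), then there is a Sylow `p`-subgroup containing both `σ` and
`W`; in particular `W` is a `p`-group. -/
theorem stmt10 (p k : ℕ) (hp : p.Prime) (hk : 1 ≤ k)
    (W : Subgroup (Equiv.Perm (ZMod (p ^ k))))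
    (hcomm : ∀ x ∈ W, ∀ y ∈ W, x * y = y * x)
    (hnorm : ∀ w : Equiv.Perm (ZMod (p ^ k)),
      w ∈ W ↔ (Equiv.addRight (1 : ZMod (p ^ k)))⁻¹ * w *
        Equiv.addRight (1 : ZMod (p ^ k)) ∈ W) :
    (∃ P : Sylow p (Equiv.Perm (ZMod (p ^ k))),
      Equiv.addRight (1 : ZMod (p ^ k)) ∈ P ∧
        W ≤ (P : Subgroup (Equiv.Perm (ZMod (p ^ k))))) ∧
    IsPGroup p W :=
  stmt10_general p k hp W hcomm hnorm
end

section
/- Let n be an even integer with n ≥ 2, let σ ∈ Perm(ZMod n) be the n-cycle σ(i) = i + 1, and let a, b be distinct elements of ZMod n. If the transposition t = swap a b commutes with all of its conjugates σ^j · t · σ^{−j} for every integer j, then b − a = n/2 in ZMod n (so t is conjugate under a power of σ to the transposition (0, n/2)). -/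
/-!
Conjugating `swap a b` by `σ ^ j` translates it to `swap (a + j) (b + j)`. Translating by
`d = b - a` gives `swap b (b + d)`, which shares the point `b` with `swap a b`; two transpositions
sharing exactly one point do not commute, so `b + d = a`, i.e. `2 • d = 0` with `d ≠ 0`. In
`ZMod n` with `n` even, the only such element is `n / 2`.
-/

open Equiv

theorem Equiv.not_commute_swap_swap {α : Type*} [DecidableEq α] {x y z : α}
    (hxy : x ≠ y) (hxz : x ≠ z) (hyz : y ≠ z) : ¬Commute (swap x y) (swap y z) := by
  intro h
  have hx := congrArg (· x) h.eq
  simp only [Perm.mul_apply, swap_apply_left, swap_apply_of_ne_of_ne hxy hxz] at hx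
  exact hyz (by simpa using hx)

theorem Equiv.addRight_mul_swap_mul_inv {G : Type*} [AddGroup G] [DecidableEq G] (c a b : G) :
    Equiv.addRight c * swap a b * (Equiv.addRight c)⁻¹ = swap (a + c) (b + c) :=
  (swap_apply_apply (Equiv.addRight c) a b).symm

theorem two_nsmul_sub_eq_zero_of_commute_swap_add {G : Type*} [AddCommGroup G] [DecidableEq G]
    {a b : G} (hab : a ≠ b) (h : ∀ c, Commute (swap a b) (swap (a + c) (b + c))) :
    2 • (b - a) = 0 := by
  by_contra h2
  have hcomm := h (b - a)
  rw [add_sub_cancel] at hcomm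
  refine not_commute_swap_swap hab (fun hx => h2 ?_) (fun hy => h2 ?_) hcomm
  · calc 2 • (b - a) = b + (b - a) - a := by abel
      _ = 0 := by rw [← hx, sub_self]
  · rw [left_eq_add.1 hy, smul_zero]

theorem ZMod.eq_half_of_two_nsmul_eq_zero {n : ℕ} (hn : Even n) {d : ZMod n} (hd : d ≠ 0)
    (h2 : 2 • d = 0) : d = ((n / 2 : ℕ) : ZMod n) := by
  obtain ⟨m, rfl⟩ := hn
  obtain ⟨x, rfl⟩ := ZMod.intCast_surjective d
  have hdvd : ((m + m : ℕ) : ℤ) ∣ 2 * x := by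
    rw [← ZMod.intCast_zmod_eq_zero_iff_dvd]
    simpa [two_mul, two_nsmul] using h2
  obtain ⟨k, rfl⟩ : (m : ℤ) ∣ x := by
    push_cast at hdvd
    rw [← two_mul] at hdvd
    exact (mul_dvd_mul_iff_left two_ne_zero).1 hdvd
  rw [show (m + m) / 2 = m by omega, ← Int.cast_natCast (R := ZMod (m + m)) m,
    ZMod.intCast_eq_intCast_iff_dvd_sub]
  rcases Int.even_or_odd' k with ⟨l, rfl | rfl⟩
  · refine absurd ?_ hd
    rw [ZMod.intCast_zmod_eq_zero_iff_dvd]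
    exact ⟨l, by push_cast; ring⟩
  · exact ⟨-l, by push_cast; ring⟩

theorem stmt11_general (n : ℕ) (hev : Even n) (a b : ZMod n) (hab : a ≠ b)
    (h : ∀ j : ℤ,
      Commute (Equiv.swap a b)
        ((Equiv.addRight (1 : ZMod n)) ^ j * Equiv.swap a b *
          ((Equiv.addRight (1 : ZMod n)) ^ j)⁻¹)) :
    b - a = ((n / 2 : ℕ) : ZMod n) := by
  have htranslates : ∀ c : ZMod n, Commute (swap a b) (swap (a + c) (b + c)) := by
    intro c
    obtain ⟨j, rfl⟩ := ZMod.intCast_surjective c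
    have hj := h j
    rwa [zsmul_addRight, zsmul_one, addRight_mul_swap_mul_inv] at hj
  exact ZMod.eq_half_of_two_nsmul_eq_zero hev (sub_ne_zero.2 hab.symm)
    (two_nsmul_sub_eq_zero_of_commute_swap_add hab htranslates)

/-- Let `n` be even, `n ≥ 2`, let `σ ∈ Perm (ZMod n)` be the `n`-cycle `σ(i) = i + 1`,
and let `a ≠ b` in `ZMod n`.  If the transposition `t = swap a b` commutes with all its
conjugates `σ^j · t · σ^{−j}` (`j ∈ ℤ`), then `b − a = n/2` in `ZMod n`. -/
theorem stmt11 (n : ℕ) (hn : 2 ≤ n) (hev : Even n) (a b : ZMod n) (hab : a ≠ b)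
    (h : ∀ j : ℤ,
      Commute (Equiv.swap a b)
        ((Equiv.addRight (1 : ZMod n)) ^ j * Equiv.swap a b *
          ((Equiv.addRight (1 : ZMod n)) ^ j)⁻¹)) :
    b - a = ((n / 2 : ℕ) : ZMod n) :=
  stmt11_general n hev a b hab h
end

section
/- Let n, s ≥ 1 be integers and let m = n / gcd(n, s). The wreath product C_m ≀ C_n, realized as the semidirect product W = (ZMod n → ZMod m) ⋊ ZMod n with ZMod n acting by shifting the argument, is isomorphic to the group presented by two generators a, b subject to the relations aⁿ = e, b^{a^j} · b^{a^{i+s}} = b^{a^i} · b^{a^{j+s}} for all i, j ∈ {0, …, n−1}, and b^{a^i} · b^{a^{i+s}} · b^{a^{i+2s}} ⋯ b^{a^{i+(m−1)s}} = e for all i ∈ {0, …, n−1}. -/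
/-- Shift of functions `ZMod n → ZMod m` by `r : ZMod n`, as an additive automorphism. -/
def shiftEquiv (n m : ℕ) (r : ZMod n) : (ZMod n → ZMod m) ≃+ (ZMod n → ZMod m) where
  toFun f := fun x => f (x + r)
  invFun f := fun x => f (x - r)
  left_inv f := funext fun x => by simp
  right_inv f := funext fun x => by simp
  map_add' f g := rfl

/-- The shift action of `ZMod n` on `ZMod n → ZMod m`, written multiplicatively. -/
def shiftHom (n m : ℕ) :
    Multiplicative (ZMod n) →* MulAut (Multiplicative (ZMod n → ZMod m)) where
  toFun r := AddEquiv.toMultiplicative (shiftEquiv n m r.toAdd)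
  map_one' := by
    apply MulEquiv.ext
    intro f
    show Multiplicative.ofAdd (fun x => f.toAdd (x + 0)) = f
    simp
  map_mul' r r' := by
    apply MulEquiv.ext
    intro f
    funext x
    show f.toAdd (x + (r.toAdd + r'.toAdd)) = f.toAdd (x + r.toAdd + r'.toAdd)
    rw [add_assoc]

/-- The regular wreath product `C_m ≀ C_n`, realized as the semidirect product
`(ZMod n → ZMod m) ⋊ ZMod n` with `ZMod n` acting by shifting the argument. -/
abbrev Wreath (n m : ℕ) : Type :=
  SemidirectProduct (Multiplicative (ZMod n → ZMod m)) (Multiplicative (ZMod n))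
    (shiftHom n m)

/-- The generator `a` of the presentation. -/
def A : FreeGroup (Fin 2) := FreeGroup.of 0

/-- The generator `b` of the presentation. -/
def B : FreeGroup (Fin 2) := FreeGroup.of 1

/-- Conjugation `x^y = y⁻¹ x y` in the free group. -/
def cj (x y : FreeGroup (Fin 2)) : FreeGroup (Fin 2) := y⁻¹ * x * y

/-- Relators: `aⁿ`, the commutation relations
`b^{a^j} · b^{a^{i+s}} = b^{a^i} · b^{a^{j+s}}` for `i, j ∈ {0, …, n−1}`, and the
product relations `b^{a^i} · b^{a^{i+s}} ⋯ b^{a^{i+(m−1)s}} = e` for `i ∈ {0, …, n−1}`. -/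
def rels (n s m : ℕ) : Set (FreeGroup (Fin 2)) :=
  {A ^ n} ∪
  {x | ∃ i < n, ∃ j < n,
      x = cj B (A ^ j) * cj B (A ^ (i + s)) * (cj B (A ^ i) * cj B (A ^ (j + s)))⁻¹} ∪
  {x | ∃ i < n, x = ((List.range m).map fun k => cj B (A ^ (i + k * s))).prod}

/-! In any group put `c i = b^{a^i} a^{-s}`. Since `a^s c (i + s) = c i a^s`, the commutation
relation says exactly that `c j` and `c i` commute, and the product relation says
`c i ^ m * a ^ (m s) = 1`, i.e. `c i ^ m = 1` because `n ∣ m s`. So `a` and `b` satisfy the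
relations iff `a ^ n = 1` and the conjugates of `c 0` by powers of `a` commute and have order
dividing `m`.
This is the universal property of `C_m ≀ C_n`, where `a` is the rotation and `c 0` the indicator
of `0`, and the two induced homomorphisms are mutually inverse since they match the generators. -/

open Multiplicative SemidirectProduct

section ConjPow

variable {G : Type*} [Group G]

def conjPow (a y : G) (k : ℕ) : G := (a ^ k)⁻¹ * y * a ^ k

variable (a y : G)

@[simp]
lemma conjPow_zero : conjPow a y 0 = y := by simp [conjPow]

@[simp]
lemma conjPow_one (k : ℕ) : conjPow a 1 k = 1 := by simp [conjPow]

lemma conjPow_conjPow (i j : ℕ) : conjPow a (conjPow a y i) j = conjPow a y (i + j) := by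
  simp only [conjPow, pow_add, mul_inv_rev, mul_assoc]

lemma conjPow_pow (i k : ℕ) : conjPow a y i ^ k = conjPow a (y ^ k) i := by
  simpa only [conjPow, inv_inv] using conj_pow (a := (a ^ i)⁻¹) (b := y) (i := k)

lemma conjPow_mod {n : ℕ} (ha : a ^ n = 1) (i : ℕ) : conjPow a y (i % n) = conjPow a y i := by
  rw [conjPow, conjPow, ← pow_eq_pow_mod i ha]

lemma conjPow_mul_pow (i s : ℕ) : conjPow a (y * a ^ s) i = conjPow a y i * a ^ s := by
  simp only [conjPow, mul_assoc, ← pow_add, add_comm s i]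

lemma pow_mul_conjPow_add (i k : ℕ) : a ^ k * conjPow a y (i + k) = conjPow a y i * a ^ k := by
  rw [← conjPow_conjPow, conjPow]
  group

lemma conjPow_mul_pow_mul_conjPow_mul_pow_add (i j s : ℕ) :
    conjPow a (y * a ^ s) j * conjPow a (y * a ^ s) (i + s)
      = conjPow a y j * conjPow a y i * a ^ (s + s) := by
  rw [conjPow_mul_pow, conjPow_mul_pow, mul_assoc (conjPow a y j), ← mul_assoc (a ^ s),
    pow_mul_conjPow_add, pow_add]
  group

lemma prod_conjPow_mul_pow (i s K : ℕ) :
    ((List.range K).map fun k => conjPow a (y * a ^ s) (i + k * s)).prod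
      = conjPow a y i ^ K * a ^ (K * s) := by
  induction K with
  | zero => simp
  | succ K ih =>
    rw [List.range_succ, List.map_append, List.prod_append, ih, List.map_singleton,
      List.prod_singleton, conjPow_mul_pow, mul_assoc, ← mul_assoc (a ^ (K * s)),
      pow_mul_conjPow_add]
    group

end ConjPow

section Relations

variable {G : Type*} [Group G]

lemma lift_cj_B_A_pow (a b : G) (k : ℕ) :
    FreeGroup.lift ![a, b] (cj B (A ^ k)) = conjPow a b k := by
  simp [cj, A, B, conjPow]

theorem lift_rels_eq_one_iff {n s m : ℕ} {a y : G} (ha : a ^ n = 1) (hms : n ∣ m * s) :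
    (∀ r ∈ rels n s m, FreeGroup.lift ![a, y * a ^ s] r = 1) ↔
      (∀ i < n, ∀ j < n, Commute (conjPow a y i) (conjPow a y j)) ∧
        ∀ i < n, conjPow a y i ^ m = 1 := by
  have ha_ms : a ^ (m * s) = 1 := by
    obtain ⟨t, ht⟩ := hms
    rw [ht, pow_mul, ha, one_pow]
  have hcomm (i j : ℕ) :
      FreeGroup.lift ![a, y * a ^ s]
          (cj B (A ^ j) * cj B (A ^ (i + s)) * (cj B (A ^ i) * cj B (A ^ (j + s)))⁻¹) = 1 ↔
        Commute (conjPow a y i) (conjPow a y j) := by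
    simp only [map_mul, map_inv, lift_cj_B_A_pow, mul_inv_eq_one,
      conjPow_mul_pow_mul_conjPow_mul_pow_add, mul_left_inj]
    exact eq_comm
  have hprod (i : ℕ) :
      FreeGroup.lift ![a, y * a ^ s] ((List.range m).map fun k => cj B (A ^ (i + k * s))).prod
        = conjPow a y i ^ m := by
    rw [map_list_prod, List.map_map]
    simp only [Function.comp_def, lift_cj_B_A_pow]
    rw [prod_conjPow_mul_pow, ha_ms, mul_one]
  constructor
  · intro h
    exact ⟨fun i hi j hj => (hcomm i j).1 (h _ (Or.inl (Or.inr ⟨i, hi, j, hj, rfl⟩))),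
      fun i hi => hprod i ▸ h _ (Or.inr ⟨i, hi, rfl⟩)⟩
  · rintro ⟨hC, hP⟩ r ((rfl | ⟨i, hi, j, hj, rfl⟩) | ⟨i, hi, rfl⟩)
    · simpa [A] using ha
    · exact (hcomm i j).2 (hC i hi j hj)
    · exact (hprod i).trans (hP i hi)

end Relations

section Homs

variable {G : Type*} [Group G]

def powZModHom {k : ℕ} [NeZero k] (g : G) (hg : g ^ k = 1) : Multiplicative (ZMod k) →* G where
  toFun x := g ^ x.toAdd.val
  map_one' := by simp
  map_mul' x y := by
    simp only [toAdd_mul, ZMod.val_add, ← pow_eq_pow_mod _ hg, pow_add]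

lemma powZModHom_apply {k : ℕ} [NeZero k] (g : G) (hg : g ^ k = 1) (x : Multiplicative (ZMod k)) :
    powZModHom g hg x = g ^ x.toAdd.val := rfl

lemma powZModHom_ofAdd_natCast {k : ℕ} [NeZero k] (g : G) (hg : g ^ k = 1) (j : ℕ) :
    powZModHom g hg (ofAdd (j : ZMod k)) = g ^ j := by
  simp only [powZModHom, MonoidHom.coe_mk, OneHom.coe_mk, toAdd_ofAdd, ZMod.val_natCast,
    ← pow_eq_pow_mod _ hg]

theorem multiplicative_pi_hom_ext {ι : Type*} [Finite ι] [DecidableEq ι] {Z : ι → Type*}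
    [∀ i, AddMonoid (Z i)] {f g : Multiplicative (∀ i, Z i) →* G}
    (h : ∀ i v, f (ofAdd (Pi.single i v)) = g (ofAdd (Pi.single i v))) : f = g := by
  let e := (MulEquiv.piMultiplicative Z).symm.toMonoidHom
  have he : f.comp e = g.comp e := MonoidHom.pi_ext fun i v => by
    have : e (Pi.mulSingle i v) = ofAdd (Pi.single i v.toAdd) := by
      ext j
      by_cases hj : j = i
      · subst hj; simp [e]
      · simp [e, hj]
    simpa [this] using h i v.toAdd
  ext x
  exact DFunLike.congr_fun he (MulEquiv.piMultiplicative Z (ofAdd x))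

end Homs

namespace Wreath

variable {n m : ℕ}

def rot : Wreath n m := inr (ofAdd 1)

def single (i : ZMod n) : Wreath n m := inl (ofAdd (Pi.single i 1))

lemma shiftHom_ofAdd_single (g : Multiplicative (ZMod n)) (i : ZMod n) (v : ZMod m) :
    shiftHom n m g (ofAdd (Pi.single i v)) = ofAdd (Pi.single (i - g.toAdd) v) := by
  show ofAdd (fun x => (Pi.single i v : ZMod n → ZMod m) (x + g.toAdd)) = _
  congr 1
  funext x
  simp only [Pi.single_apply, eq_sub_iff_add_eq]

lemma rot_pow (k : ℕ) : (rot : Wreath n m) ^ k = inr (ofAdd (k : ZMod n)) := by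
  rw [rot, ← map_pow, ← ofAdd_nsmul, nsmul_one]

lemma rot_pow_eq_one : (rot : Wreath n m) ^ n = 1 := by
  simp [rot_pow]

lemma conjPow_rot_single (i : ZMod n) (k : ℕ) :
    conjPow rot (single i : Wreath n m) k = single (i + (k : ZMod n)) := by
  rw [conjPow, rot_pow, single, single, ← map_inv, ← inl_aut_inv, ← map_inv,
    shiftHom_ofAdd_single, toAdd_inv, toAdd_ofAdd, sub_neg_eq_add]

lemma single_pow_eq_one (i : ZMod n) : (single i : Wreath n m) ^ m = 1 := by
  simp [single, ← map_pow, ← ofAdd_nsmul]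

lemma commute_single (i j : ZMod n) : Commute (single i : Wreath n m) (single j) :=
  (Commute.all _ _).map inl

variable {G : Type*} [Group G]

theorem hom_ext [NeZero n] {f g : Wreath n m →* G} (hrot : f rot = g rot)
    (hsingle : f (single 0) = g (single 0)) : f = g := by
  have hinr : f.comp inr = g.comp inr := by
    refine MonoidHom.ext fun r => ?_
    obtain ⟨k, hk⟩ := ZMod.intCast_surjective r.toAdd
    have hr : r = ofAdd (1 : ZMod n) ^ k := by rw [← ofAdd_zsmul, zsmul_one, hk, ofAdd_toAdd]
    simp only [MonoidHom.comp_apply, hr, map_zpow]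
    exact congrArg (· ^ k) hrot
  refine SemidirectProduct.hom_ext (multiplicative_pi_hom_ext fun i v => ?_) hinr
  obtain ⟨k, rfl⟩ := ZMod.intCast_surjective v
  have hv : ofAdd (Pi.single i (k : ZMod m) : ZMod n → ZMod m)
      = ofAdd (Pi.single i 1 : ZMod n → ZMod m) ^ k := by
    rw [← ofAdd_zsmul, ← Pi.single_smul, zsmul_one]
  have hi : (inl (ofAdd (Pi.single i 1)) : Wreath n m)
      = inr (ofAdd (-i)) * single 0 * (inr (ofAdd (-i)))⁻¹ := by
    rw [← map_inv, single, ← inl_aut, shiftHom_ofAdd_single, toAdd_ofAdd, zero_sub, neg_neg]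
  have hinr' := DFunLike.congr_fun hinr (ofAdd (-i))
  simp only [MonoidHom.comp_apply] at hinr' ⊢
  simp only [hv, map_zpow, hi, map_mul, map_inv, hinr', hsingle]

section Lift

variable [NeZero n] [NeZero m] (x y : G) (hx : x ^ n = 1) (hy : y ^ m = 1)
  (hcomm : ∀ i < n, ∀ j < n, Commute (conjPow x y i) (conjPow x y j))

def liftBase : Multiplicative (ZMod n → ZMod m) →* G :=
  (MonoidHom.noncommPiCoprod
      (fun i : ZMod n => powZModHom (conjPow x y i.val) (by rw [conjPow_pow, hy, conjPow_one]))
      (by intro i j _ u v; exact (hcomm _ i.val_lt _ j.val_lt).pow_pow _ _)).comp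
    (MulEquiv.piMultiplicative _).toMonoidHom

lemma liftBase_ofAdd_single (i : ZMod n) (v : ZMod m) :
    liftBase x y hy hcomm (ofAdd (Pi.single i v)) = conjPow x y i.val ^ v.val := by
  have : MulEquiv.piMultiplicative _ (ofAdd (Pi.single i v : ZMod n → ZMod m))
      = Pi.mulSingle i (ofAdd v) := by
    ext j
    by_cases hj : j = i
    · subst hj; simp
    · simp [hj]
  rw [liftBase, MonoidHom.comp_apply, MulEquiv.coe_toMonoidHom, this]
  exact MonoidHom.noncommPiCoprod_mulSingle (N := fun _ => Multiplicative (ZMod m)) _ i _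

lemma liftBase_comp_shiftHom (g : Multiplicative (ZMod n)) :
    (liftBase x y hy hcomm).comp (shiftHom n m g).toMonoidHom
      = (MulAut.conj (powZModHom x hx g)).toMonoidHom.comp (liftBase x y hy hcomm) := by
  refine multiplicative_pi_hom_ext fun i v => ?_
  have hshift : conjPow x y (i - g.toAdd).val
      = x ^ g.toAdd.val * conjPow x y i.val * (x ^ g.toAdd.val)⁻¹ := by
    have h := conjPow_conjPow x y (i - g.toAdd).val g.toAdd.val
    rw [← conjPow_mod x y hx (_ + _), ← ZMod.val_add, sub_add_cancel] at h
    rw [← h]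
    simp only [conjPow]
    group
  simp only [MonoidHom.comp_apply, MulEquiv.coe_toMonoidHom, shiftHom_ofAdd_single,
    liftBase_ofAdd_single, MulAut.conj_apply, powZModHom_apply, hshift, conj_pow]

def lift : Wreath n m →* G :=
  SemidirectProduct.lift (liftBase x y hy hcomm) (powZModHom x hx)
    (liftBase_comp_shiftHom x y hx hy hcomm)

lemma lift_rot : lift x y hx hy hcomm rot = x := by
  rw [lift, rot, SemidirectProduct.lift_inr, ← Nat.cast_one, powZModHom_ofAdd_natCast, pow_one]

lemma lift_single_zero : lift x y hx hy hcomm (single 0) = y := by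
  rw [lift, single, SemidirectProduct.lift_inl, liftBase_ofAdd_single, ZMod.val_zero, conjPow_zero,
    ZMod.val_one_eq_one_mod, ← pow_eq_pow_mod _ hy, pow_one]

end Lift

end Wreath

lemma PresentedGroup.lift_of_eq_one_of_mem {α : Type*} {rels : Set (FreeGroup α)}
    {r : FreeGroup α} (hr : r ∈ rels) : FreeGroup.lift (PresentedGroup.of (rels := rels)) r = 1 := by
  rw [← PresentedGroup.one_of_mem hr]
  exact (FreeGroup.lift_unique (PresentedGroup.mk rels) fun _ => rfl).symm

section Presentation

variable {n s m : ℕ}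

lemma Wreath.lift_rels_eq_one (hms : n ∣ m * s) :
    ∀ r ∈ rels n s m,
      FreeGroup.lift ![(Wreath.rot : Wreath n m), Wreath.single 0 * Wreath.rot ^ s] r = 1 :=
  (lift_rels_eq_one_iff Wreath.rot_pow_eq_one hms).2
    ⟨fun i _ j _ => by simpa only [Wreath.conjPow_rot_single] using Wreath.commute_single _ _,
      fun i _ => by rw [Wreath.conjPow_rot_single, Wreath.single_pow_eq_one]⟩

local notation "gen" i => (PresentedGroup.of i : PresentedGroup (rels n s m))

lemma of_zero_pow_eq_one : (gen 0) ^ n = 1 := by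
  simpa [A] using PresentedGroup.lift_of_eq_one_of_mem (rels := rels n s m) (Or.inl (Or.inl rfl))

lemma commute_conjPow_of_and_pow_eq_one (hms : n ∣ m * s) :
    (∀ i < n, ∀ j < n, Commute (conjPow (gen 0) ((gen 1) * ((gen 0) ^ s)⁻¹) i)
        (conjPow (gen 0) ((gen 1) * ((gen 0) ^ s)⁻¹) j)) ∧
      ∀ i < n, conjPow (gen 0) ((gen 1) * ((gen 0) ^ s)⁻¹) i ^ m = 1 := by
  refine (lift_rels_eq_one_iff of_zero_pow_eq_one hms).1 fun r hr => ?_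
  have : ![gen 0, (gen 1) * ((gen 0) ^ s)⁻¹ * (gen 0) ^ s] = PresentedGroup.of := by
    ext i; fin_cases i <;> simp
  rw [this]
  exact PresentedGroup.lift_of_eq_one_of_mem hr

def presentedToWreath (hms : n ∣ m * s) : PresentedGroup (rels n s m) →* Wreath n m :=
  PresentedGroup.toGroup (Wreath.lift_rels_eq_one hms)

def wreathToPresented [NeZero n] [NeZero m] (hms : n ∣ m * s) :
    Wreath n m →* PresentedGroup (rels n s m) :=
  Wreath.lift (gen 0) ((gen 1) * ((gen 0) ^ s)⁻¹) of_zero_pow_eq_one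
    (by simpa using (commute_conjPow_of_and_pow_eq_one hms).2 0 (NeZero.pos n))
    (commute_conjPow_of_and_pow_eq_one hms).1

def presentedGroupEquivWreath [NeZero n] [NeZero m] (hms : n ∣ m * s) :
    PresentedGroup (rels n s m) ≃* Wreath n m :=
  MonoidHom.toMulEquiv (presentedToWreath hms) (wreathToPresented hms)
    (PresentedGroup.ext fun i => by
      fin_cases i
      · simp [presentedToWreath, wreathToPresented, Wreath.lift_rot]
      · simp [presentedToWreath, wreathToPresented, Wreath.lift_rot, Wreath.lift_single_zero])
    (Wreath.hom_ext
      (by simp [presentedToWreath, wreathToPresented, Wreath.lift_rot])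
      (by simp [presentedToWreath, wreathToPresented, Wreath.lift_single_zero]))

end Presentation

theorem stmt16_general (n s : ℕ) (hn : 1 ≤ n) (m : ℕ) (hm : m = n / Nat.gcd n s) :
    Nonempty (PresentedGroup (rels n s m) ≃* Wreath n m) := by
  have : NeZero n := ⟨by omega⟩
  have : NeZero m := ⟨by
    rw [hm]
    exact (Nat.div_pos (Nat.gcd_le_left s hn) (Nat.gcd_pos_of_pos_left s hn)).ne'⟩
  have hms : n ∣ m * s := by
    rw [hm, Nat.div_mul_right_comm (Nat.gcd_dvd_left n s)]
    exact Nat.dvd_lcm_left n s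
  exact ⟨presentedGroupEquivWreath hms⟩

/-- For `n, s ≥ 1` and `m = n / gcd(n, s)`, the wreath product `C_m ≀ C_n` is isomorphic
to the group presented by generators `a, b` with the relations `aⁿ = e`,
`b^{a^j} b^{a^{i+s}} = b^{a^i} b^{a^{j+s}}` (`0 ≤ i, j ≤ n−1`), and
`b^{a^i} b^{a^{i+s}} ⋯ b^{a^{i+(m−1)s}} = e` (`0 ≤ i ≤ n−1`). -/
theorem stmt16 (n s : ℕ) (hn : 1 ≤ n) (hs : 1 ≤ s) (m : ℕ) (hm : m = n / Nat.gcd n s) :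
    Nonempty (PresentedGroup (rels n s m) ≃* Wreath n m) :=
  stmt16_general n s hn m hm
end

section
/- Let n, s ≥ 1 be integers and let m = n / gcd(n, s). Let X be the group presented by generators b₀, b₁, …, b_{n−1} subject to the relations b_i · b_{(j+s) mod n} = b_j · b_{(i+s) mod n} for all i, j ∈ {0, …, n−1}, and b_i · b_{(i+s) mod n} · b_{(i+2s) mod n} ⋯ b_{(i+(m−1)s) mod n} = e for all i ∈ {0, …, n−1}. Then there exists an injective group homomorphism from X into the wreath product C_m ≀ C_n, realized as the semidirect product (ZMod n → ZMod m) ⋊ ZMod n with shift action. -/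
/-- Relators of the Fibonacci-type group `X`: generators `b_i` (`i` taken modulo `n`),
with relations `b_i · b_{j+s} = b_j · b_{i+s}` for all `i, j`, and
`b_i · b_{i+s} · b_{i+2s} ⋯ b_{i+(m−1)s} = e` for all `i`. -/
def relsX (n s m : ℕ) : Set (FreeGroup (ZMod n)) :=
  {x | ∃ i j : ZMod n,
      x = FreeGroup.of i * FreeGroup.of (j + (s : ZMod n)) *
        (FreeGroup.of j * FreeGroup.of (i + (s : ZMod n)))⁻¹} ∪
  {x | ∃ i : ZMod n,
      x = ((List.range m).map fun k => FreeGroup.of (i + (k : ZMod n) * (s : ZMod n))).prod}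

namespace Stmt17

variable (n s m : ℕ)

abbrev X (n s m : ℕ) := PresentedGroup (relsX n s m)

def b (i : ZMod n) : X n s m := PresentedGroup.of i

lemma mk_rel_one {r : FreeGroup (ZMod n)} (hr : r ∈ relsX n s m) :
    PresentedGroup.mk (relsX n s m) r = 1 := by
  have : r ∈ Subgroup.normalClosure (relsX n s m) := Subgroup.subset_normalClosure hr
  exact (QuotientGroup.eq_one_iff r).mpr this

lemma rel1 (i j : ZMod n) :
    b n s m i * b n s m (j + (s : ZMod n)) = b n s m j * b n s m (i + (s : ZMod n)) := by
  have h := mk_rel_one n s m (Or.inl ⟨i, j, rfl⟩)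
  simp only [map_mul, map_inv] at h
  rw [mul_inv_eq_one] at h
  exact h

lemma flatMap_single {β : Type*} (l : List ℕ) (f : ℕ → β) :
    l.flatMap (fun a => [f a]) = l.map f := by
  induction l with
  | nil => rfl
  | cons a t ih => simp [ih]

lemma rel2 (i : ZMod n) :
    ((List.range m).map fun k : ℕ => b n s m (i + ((k : ℕ) : ZMod n) * (s : ZMod n))).prod = 1 := by
  have key : ((List.range m).map fun k : ℕ => b n s m (i + ((k : ℕ) : ZMod n) * (s : ZMod n))).prod
      = PresentedGroup.mk (relsX n s m)
        (((List.range m).map fun k => FreeGroup.of (i + (k : ZMod n) * (s : ZMod n))).prod) := by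
    rw [map_list_prod]
    show _ = (List.map (⇑(PresentedGroup.mk (relsX n s m)))
        (List.map (fun k : ZMod n => FreeGroup.of (i + k * (s : ZMod n)))
          ((List.range m).flatMap fun a : ℕ => [(a : ZMod n)]))).prod
    rw [flatMap_single, List.map_map, List.map_map]
    rfl
  rw [key]
  exact mk_rel_one n s m (Or.inr ⟨i, rfl⟩)

-- continues namespace Stmt17, variables (n s m)

/-- Block of generators `b (x + T·s), b (x + (T+1)·s), …` of length `cnt`. -/
def blk (x : ZMod n) (T cnt : ℕ) : X n s m :=
  ((List.range cnt).map fun t => b n s m (x + (((T + t) * s : ℕ) : ZMod n))).prod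

lemma blk_zero (x : ZMod n) (T : ℕ) : blk n s m x T 0 = 1 := by
  simp [blk]

lemma blk_succ (x : ZMod n) (T c : ℕ) :
    blk n s m x T (c + 1) = blk n s m x T c * b n s m (x + (((T + c) * s : ℕ) : ZMod n)) := by
  simp [blk, List.range_succ]

/-- Moving a generator right past a block: it gains `c·s` and the block's start drops by 1. -/
lemma swap_blk (y : ZMod n) (c : ℕ) :
    ∀ (x : ZMod n) (T : ℕ),
      b n s m x * blk n s m y (T + 1) c = blk n s m y T c * b n s m (x + ((c * s : ℕ) : ZMod n)) := by
  induction c with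
  | zero => intro x T; simp [blk_zero]
  | succ c ih =>
    intro x T
    rw [blk_succ, blk_succ, ← mul_assoc, ih x T, mul_assoc, mul_assoc]
    congr 1
    have h := rel1 n s m (x + ((c * s : ℕ) : ZMod n)) (y + (((T + c) * s : ℕ) : ZMod n))
    have e1 : y + (((T + c) * s : ℕ) : ZMod n) + (s : ZMod n) = y + (((T + 1 + c) * s : ℕ) : ZMod n) := by
      push_cast; ring
    have e2 : x + ((c * s : ℕ) : ZMod n) + (s : ZMod n) = x + (((c + 1) * s : ℕ) : ZMod n) := by
      push_cast; ring
    rw [e1, e2] at h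
    exact h

/-- The canonical word: product of blocks for indices `j, j+1, …, n-1`,
with running start `T`. -/
def cfrom (a : ZMod n → ℕ) (j T : ℕ) : X n s m :=
  if h : j < n then blk n s m (j : ZMod n) T (a j) * cfrom a (j + 1) (T + a j) else 1
termination_by n - j
decreasing_by omega

lemma cfrom_of_lt (a : ZMod n → ℕ) {j : ℕ} (T : ℕ) (h : j < n) :
    cfrom n s m a j T = blk n s m (j : ZMod n) T (a j) * cfrom n s m a (j + 1) (T + a j) := by
  rw [cfrom, dif_pos h]

lemma cfrom_of_ge (a : ZMod n → ℕ) {j : ℕ} (T : ℕ) (h : ¬ j < n) :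
    cfrom n s m a j T = 1 := by
  rw [cfrom, dif_neg h]

/-- Sum of the values of `a` on `[j, n)`. -/
def Rsum (a : ZMod n → ℕ) (j : ℕ) : ℕ := ∑ k ∈ Finset.Ico j n, a (k : ZMod n)

lemma Rsum_of_ge (a : ZMod n → ℕ) {j : ℕ} (h : ¬ j < n) : Rsum n a j = 0 := by
  rw [Rsum, Finset.Ico_eq_empty (by omega), Finset.sum_empty]

lemma Rsum_of_lt (a : ZMod n → ℕ) {j : ℕ} (h : j < n) :
    Rsum n a j = a (j : ZMod n) + Rsum n a (j + 1) := by
  rw [Rsum, Rsum, Finset.sum_eq_sum_Ico_succ_bot h]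

lemma shift_cfrom (a : ZMod n → ℕ) :
    ∀ (j T : ℕ) (x : ZMod n),
      b n s m x * cfrom n s m a j (T + 1)
        = cfrom n s m a j T * b n s m (x + ((Rsum n a j * s : ℕ) : ZMod n)) := by
  have H : ∀ (d j : ℕ), n - j ≤ d → ∀ (T : ℕ) (x : ZMod n),
      b n s m x * cfrom n s m a j (T + 1)
        = cfrom n s m a j T * b n s m (x + ((Rsum n a j * s : ℕ) : ZMod n)) := by
    intro d
    induction d with
    | zero =>
      intro j hj T x
      have h : ¬ j < n := by omega
      rw [cfrom_of_ge n s m a _ h, cfrom_of_ge n s m a _ h, Rsum_of_ge n a h]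
      simp
    | succ d ihd =>
      intro j hj T x
      by_cases h : j < n
      · rw [cfrom_of_lt n s m a _ h, cfrom_of_lt n s m a _ h, ← mul_assoc,
          swap_blk, mul_assoc]
        have e : T + 1 + a (j : ZMod n) = (T + a (j : ZMod n)) + 1 := by omega
        rw [e, ihd (j + 1) (by omega), ← mul_assoc]
        congr 1
        rw [Rsum_of_lt n a h]
        congr 1
        push_cast
        ring
      · rw [cfrom_of_ge n s m a _ h, cfrom_of_ge n s m a _ h, Rsum_of_ge n a h]
        simp
  exact fun j => H (n - j) j le_rfl

lemma cfrom_congr (a a' : ZMod n → ℕ) :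
    ∀ (j T : ℕ), (∀ k : ℕ, j ≤ k → k < n → a (k : ZMod n) = a' (k : ZMod n)) →
      cfrom n s m a j T = cfrom n s m a' j T := by
  have H : ∀ (d j : ℕ), n - j ≤ d → ∀ (T : ℕ),
      (∀ k : ℕ, j ≤ k → k < n → a (k : ZMod n) = a' (k : ZMod n)) →
      cfrom n s m a j T = cfrom n s m a' j T := by
    intro d
    induction d with
    | zero =>
      intro j hj T _
      have h : ¬ j < n := by omega
      rw [cfrom_of_ge n s m a _ h, cfrom_of_ge n s m a' _ h]
    | succ d ihd =>
      intro j hj T hagr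
      by_cases h : j < n
      · rw [cfrom_of_lt n s m a _ h, cfrom_of_lt n s m a' _ h,
          hagr j le_rfl h, ihd (j + 1) (by omega) _ (fun k hk hk' => hagr k (by omega) hk')]
      · rw [cfrom_of_ge n s m a _ h, cfrom_of_ge n s m a' _ h]
  exact fun j T h => H (n - j) j le_rfl T h

lemma cfrom_zero_fun :
    ∀ (j T : ℕ), cfrom n s m (fun _ => 0) j T = 1 := by
  have H : ∀ (d j : ℕ), n - j ≤ d → ∀ (T : ℕ), cfrom n s m (fun _ => 0) j T = 1 := by
    intro d
    induction d with
    | zero =>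
      intro j hj T
      exact cfrom_of_ge n s m _ _ (by omega)
    | succ d ihd =>
      intro j hj T
      by_cases h : j < n
      · rw [cfrom_of_lt n s m _ _ h, blk_zero, ihd (j + 1) (by omega), one_mul]
      · exact cfrom_of_ge n s m _ _ h
  exact fun j T => H (n - j) j le_rfl T

section WithNeZero
variable [NeZero n]

lemma natCast_val_self (J : ZMod n) : ((J.val : ℕ) : ZMod n) = J :=
  ZMod.natCast_rightInverse J

lemma cast_ne_of_ne_val {k : ℕ} (hk : k < n) {J : ZMod n} (h : k ≠ J.val) :
    (k : ZMod n) ≠ J := by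
  intro he
  apply h
  rw [← he, ZMod.val_cast_of_lt hk]

/-- Indicator function with value `1` at `J`, as a `ℕ`-valued function. -/
def eN (J : ZMod n) : ZMod n → ℕ := fun x => if x = J then 1 else 0

lemma key_at (a : ZMod n → ℕ) (J : ZMod n) (T : ℕ) :
    cfrom n s m (a + eN n J) J.val T
      = cfrom n s m a J.val T * b n s m (J + (((T + Rsum n a J.val) * s : ℕ) : ZMod n)) := by
  have hJ : J.val < n := ZMod.val_lt J
  rw [cfrom_of_lt n s m _ _ hJ, cfrom_of_lt n s m a _ hJ]
  have hJc : ((J.val : ℕ) : ZMod n) = J := natCast_val_self n J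
  have hval : (a + eN n J) ((J.val : ℕ) : ZMod n) = a ((J.val : ℕ) : ZMod n) + 1 := by
    simp [eN, hJc]
  rw [hval, blk_succ, hJc]
  have hcong : cfrom n s m (a + eN n J) (J.val + 1) (T + a J + 1)
      = cfrom n s m a (J.val + 1) (T + a J + 1) := by
    apply cfrom_congr
    intro k hk hk'
    have : (k : ZMod n) ≠ J := cast_ne_of_ne_val n hk' (by omega)
    simp [eN, this, Pi.add_apply]
  have e : T + (a J + 1) = (T + a J) + 1 := by omega
  rw [e, hcong, mul_assoc, shift_cfrom, ← mul_assoc]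
  congr 2
  rw [Rsum_of_lt n a hJ, hJc]
  push_cast
  ring

lemma key_lo (a : ZMod n → ℕ) (J : ZMod n) :
    ∀ (j T : ℕ), j ≤ J.val →
      cfrom n s m (a + eN n J) j T
        = cfrom n s m a j T * b n s m (J + (((T + Rsum n a j) * s : ℕ) : ZMod n)) := by
  have H : ∀ (d j : ℕ), J.val - j ≤ d → ∀ (T : ℕ), j ≤ J.val →
      cfrom n s m (a + eN n J) j T
        = cfrom n s m a j T * b n s m (J + (((T + Rsum n a j) * s : ℕ) : ZMod n)) := by
    intro d
    induction d with
    | zero =>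
      intro j hd T hj
      have : j = J.val := by omega
      subst this
      exact key_at n s m a J T
    | succ d ihd =>
      intro j hd T hj
      rcases eq_or_lt_of_le hj with he | hlt
      · subst he
        exact key_at n s m a J T
      · have hjn : j < n := lt_trans hlt (ZMod.val_lt J)
        rw [cfrom_of_lt n s m _ _ hjn, cfrom_of_lt n s m a _ hjn]
        have hne : (j : ZMod n) ≠ J := cast_ne_of_ne_val n hjn (by omega)
        have hval : (a + eN n J) ((j : ℕ) : ZMod n) = a ((j : ℕ) : ZMod n) := by
          simp [eN, hne]
        rw [hval, ihd (j + 1) (by omega) _ (by omega), ← mul_assoc]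
        congr 2
        rw [Rsum_of_lt n a hjn]
        push_cast
        ring

  exact fun j T hj => H (J.val - j) j le_rfl T hj

/-- THE key lemma: adding one to `a` at `J` multiplies the canonical word on the
right by `b (J + (Σa)·s)`. -/
lemma key (a : ZMod n → ℕ) (J : ZMod n) :
    cfrom n s m (a + eN n J) 0 0
      = cfrom n s m a 0 0 * b n s m (J + ((Rsum n a 0 * s : ℕ) : ZMod n)) := by
  have := key_lo n s m a J 0 0 (Nat.zero_le _)
  simpa using this

end WithNeZero

section WithNeZero2
variable [NeZero n]

lemma Rsum_add (f g : ZMod n → ℕ) (j : ℕ) :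
    Rsum n (fun x => f x + g x) j = Rsum n f j + Rsum n g j := by
  simp [Rsum, Finset.sum_add_distrib]

lemma Rsum_eN (J : ZMod n) : Rsum n (eN n J) 0 = 1 := by
  rw [Rsum]
  have h : ∀ k ∈ Finset.Ico 0 n, eN n J ((k : ℕ) : ZMod n) = if k = J.val then 1 else 0 := by
    intro k hk
    simp only [Finset.mem_Ico] at hk
    by_cases he : k = J.val
    · subst he
      simp [eN, natCast_val_self n J]
    · have : (k : ZMod n) ≠ J := cast_ne_of_ne_val n hk.2 he
      simp [eN, this, he]
  rw [Finset.sum_congr rfl h, Finset.sum_ite_eq' (Finset.Ico 0 n) J.val (fun _ => 1)]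
  have hmem : J.val ∈ Finset.Ico 0 n := by
    simp only [Finset.mem_Ico]
    exact ⟨Nat.zero_le _, ZMod.val_lt J⟩
  rw [if_pos hmem]

lemma Rsum_mul_eN (k : ℕ) (J : ZMod n) : Rsum n (fun x => k * eN n J x) 0 = k := by
  have : Rsum n (fun x => k * eN n J x) 0 = k * Rsum n (eN n J) 0 := by
    simp [Rsum, Finset.mul_sum]
  rw [this, Rsum_eN, mul_one]

lemma key_iter (a : ZMod n → ℕ) (J : ZMod n) :
    ∀ k : ℕ, cfrom n s m (fun x => a x + k * eN n J x) 0 0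
      = cfrom n s m a 0 0 *
        ((List.range k).map fun t =>
          b n s m (J + (((Rsum n a 0 + t) * s : ℕ) : ZMod n))).prod := by
  intro k
  induction k with
  | zero => simp
  | succ k ih =>
    have he : (fun x => a x + (k + 1) * eN n J x)
        = (fun x => a x + k * eN n J x) + eN n J := by
      funext x
      simp [Pi.add_apply]
      ring
    rw [he, key n s m _ J, ih, List.range_succ, mul_assoc]
    have hr : Rsum n (fun x => a x + k * eN n J x) 0 = Rsum n a 0 + k := by
      rw [Rsum_add, Rsum_mul_eN]
    rw [hr]
    simp

lemma c_m_step (a : ZMod n → ℕ) (J : ZMod n) :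
    cfrom n s m (fun x => a x + m * eN n J x) 0 0 = cfrom n s m a 0 0 := by
  rw [key_iter n s m a J m]
  have : ((List.range m).map fun t =>
      b n s m (J + (((Rsum n a 0 + t) * s : ℕ) : ZMod n))).prod = 1 := by
    have h2 := rel2 n s m (J + ((Rsum n a 0 * s : ℕ) : ZMod n))
    rw [← h2]
    apply congrArg List.prod
    apply List.map_congr_left
    intro t _
    congr 1
    push_cast
    ring
  rw [this, mul_one]

lemma c_invariant (hm1 : 1 ≤ m) :
    ∀ (N : ℕ) (a a' : ZMod n → ℕ), Rsum n a 0 + Rsum n a' 0 ≤ N →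
      (∀ x : ZMod n, ((a x : ZMod m) = (a' x : ZMod m))) →
      cfrom n s m a 0 0 = cfrom n s m a' 0 0 := by
  intro N
  induction N using Nat.strong_induction_on with
  | _ N ih =>
    intro a a' hN hcong
    by_cases ha : ∃ x : ZMod n, m ≤ a x
    · obtain ⟨x, hx⟩ := ha
      set a'' : ZMod n → ℕ := fun y => a y - m * eN n x y with ha''
      have hdec : a = fun y => a'' y + m * eN n x y := by
        funext y
        by_cases hy : y = x
        · subst hy
          simp [ha'', eN]
          omega
        · simp [ha'', eN, hy]
      have hca : cfrom n s m a 0 0 = cfrom n s m a'' 0 0 := by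
        conv_lhs => rw [hdec]
        exact c_m_step n s m a'' x
      have hRsum : Rsum n a 0 = Rsum n a'' 0 + m := by
        conv_lhs => rw [hdec]
        rw [Rsum_add, Rsum_mul_eN]
      have hcong'' : ∀ y : ZMod n, ((a'' y : ZMod m) = (a' y : ZMod m)) := by
        intro y
        rw [← hcong y]
        by_cases hy : y = x
        · subst hy
          have hv : a y = a'' y + m := by
            have h5 : a'' y = a y - m := by simp [ha'', eN]
            omega
          rw [hv]
          push_cast
          simp
        · simp [ha'', eN, hy]
      rw [hca]
      have hmle : m ≤ Rsum n a 0 := by omega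
      exact ih (N - m) (by omega) a'' a' (by omega) hcong''
    · by_cases ha' : ∃ x : ZMod n, m ≤ a' x
      · obtain ⟨x, hx⟩ := ha'
        -- symmetric: swap roles
        have := ih N
        set a'' : ZMod n → ℕ := fun y => a' y - m * eN n x y with ha''
        have hdec : a' = fun y => a'' y + m * eN n x y := by
          funext y
          by_cases hy : y = x
          · subst hy
            simp [ha'', eN]
            omega
          · simp [ha'', eN, hy]
        have hca : cfrom n s m a' 0 0 = cfrom n s m a'' 0 0 := by
          conv_lhs => rw [hdec]
          exact c_m_step n s m a'' x
        have hRsum : Rsum n a' 0 = Rsum n a'' 0 + m := by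
          conv_lhs => rw [hdec]
          rw [Rsum_add, Rsum_mul_eN]
        have hcong'' : ∀ y : ZMod n, ((a y : ZMod m) = (a'' y : ZMod m)) := by
          intro y
          rw [hcong y]
          by_cases hy : y = x
          · subst hy
            have hv : a' y = a'' y + m := by
              have h5 : a'' y = a' y - m := by simp [ha'', eN]
              omega
            rw [hv]
            push_cast
            simp
          · simp [ha'', eN, hy]
        rw [hca]
        have hmle : m ≤ Rsum n a' 0 := by omega
        exact ih (N - m) (by omega) a a'' (by omega) hcong''
      · push_neg at ha ha'
        have : a = a' := by
          funext y
          have h1 : a y ≡ a' y [MOD m] := (ZMod.natCast_eq_natCast_iff _ _ _).mp (hcong y)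
          have h2 : a y % m = a' y % m := h1
          have h3 : a y < m := ha y
          have h4 : a' y < m := ha' y
          rw [Nat.mod_eq_of_lt h3, Nat.mod_eq_of_lt h4] at h2
          exact h2
        rw [this]

end WithNeZero2

section ZModLevel
variable [NeZero n] [NeZero m]

/-- Indicator function with value `1` at `J`, `ZMod m`-valued. -/
def eZ (J : ZMod n) : ZMod n → ZMod m := fun x => if x = J then 1 else 0

/-- Lift of a `ZMod m`-valued function to `ℕ`. -/
def lf (g : ZMod n → ZMod m) : ZMod n → ℕ := fun x => (g x).val

/-- The canonical element of the presented group associated to `g`. -/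
def cc (g : ZMod n → ZMod m) : X n s m := cfrom n s m (lf n m g) 0 0

/-- Total sum of values. -/
def Ssum (g : ZMod n → ZMod m) : ZMod m := ∑ x : ZMod n, g x

/-- The "shift amount" associated to `t : ZMod m`. -/
def sig (t : ZMod m) : ZMod n := ((t.val * s : ℕ) : ZMod n)

lemma cast_mul_s_congr (hdvd : n ∣ m * s) {N N' : ℕ} (h : (N : ZMod m) = (N' : ZMod m)) :
    ((N * s : ℕ) : ZMod n) = ((N' * s : ℕ) : ZMod n) := by
  rw [ZMod.natCast_eq_natCast_iff] at h ⊢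
  exact Nat.ModEq.of_dvd hdvd (h.mul_right' s)

lemma sig_natCast (hdvd : n ∣ m * s) (N : ℕ) :
    sig n s m ((N : ZMod m)) = ((N * s : ℕ) : ZMod n) := by
  apply cast_mul_s_congr n s m hdvd
  rw [ZMod.natCast_val, ZMod.cast_id]

lemma sig_add (hdvd : n ∣ m * s) (t u : ZMod m) :
    sig n s m (t + u) = sig n s m t + sig n s m u := by
  have h1 : sig n s m (t + u) = (((t.val + u.val) * s : ℕ) : ZMod n) := by
    apply cast_mul_s_congr n s m hdvd
    push_cast [ZMod.natCast_val, ZMod.cast_id]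
    rfl
  rw [h1, sig, sig]
  push_cast
  ring

lemma sig_zero : sig n s m 0 = 0 := by
  simp [sig, ZMod.val_zero]

lemma sig_neg (hdvd : n ∣ m * s) (t : ZMod m) : sig n s m (-t) = - sig n s m t := by
  have h2 := sig_add n s m hdvd t (-t)
  rw [add_neg_cancel, sig_zero] at h2
  exact (neg_eq_of_add_eq_zero_right h2.symm).symm

lemma sum_Ico_cast {M : Type*} [AddCommMonoid M] (F : ZMod n → M) :
    ∑ k ∈ Finset.Ico 0 n, F ((k : ℕ) : ZMod n) = ∑ x : ZMod n, F x := by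
  apply Finset.sum_nbij' (fun k => ((k : ℕ) : ZMod n)) (fun x => x.val)
  · intro k _
    exact Finset.mem_univ _
  · intro x _
    simp only [Finset.mem_Ico]
    exact ⟨Nat.zero_le _, ZMod.val_lt x⟩
  · intro k hk
    simp only [Finset.mem_Ico] at hk
    exact ZMod.val_cast_of_lt hk.2
  · intro x _
    exact natCast_val_self n x
  · intro k _
    rfl

lemma cast_Rsum_lf (g : ZMod n → ZMod m) :
    ((Rsum n (lf n m g) 0 : ℕ) : ZMod m) = Ssum n m g := by
  rw [Rsum, Ssum, Nat.cast_sum]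
  rw [sum_Ico_cast n (fun x => ((lf n m g x : ℕ) : ZMod m))]
  apply Finset.sum_congr rfl
  intro x _
  simp [lf, ZMod.natCast_val, ZMod.cast_id]

lemma sig_Ssum_eq (hdvd : n ∣ m * s) (g : ZMod n → ZMod m) :
    sig n s m (Ssum n m g) = ((Rsum n (lf n m g) 0 * s : ℕ) : ZMod n) := by
  rw [← cast_Rsum_lf n m g, sig_natCast n s m hdvd]

lemma keyZ (hdvd : n ∣ m * s) (hm1 : 1 ≤ m) (g : ZMod n → ZMod m) (J : ZMod n) :
    cc n s m (g + eZ n m J) = cc n s m g * b n s m (J + sig n s m (Ssum n m g)) := by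
  have hinv : cfrom n s m (lf n m (g + eZ n m J)) 0 0
      = cfrom n s m (lf n m g + eN n J) 0 0 := by
    apply c_invariant n s m hm1
      (Rsum n (lf n m (g + eZ n m J)) 0 + Rsum n (lf n m g + eN n J) 0) _ _ le_rfl
    intro x
    have h1 : ((lf n m (g + eZ n m J) x : ℕ) : ZMod m) = g x + eZ n m J x := by
      simp [lf, ZMod.natCast_val, ZMod.cast_id]
    have h2 : (((lf n m g + eN n J) x : ℕ) : ZMod m) = g x + eZ n m J x := by
      simp [lf, eN, eZ, Pi.add_apply, ZMod.natCast_val, ZMod.cast_id,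
        apply_ite (Nat.cast : ℕ → ZMod m)]
    rw [h1, h2]
  rw [cc, hinv, key n s m (lf n m g) J, sig_Ssum_eq n s m hdvd]
  rfl

lemma cc_zero : cc n s m 0 = 1 := by
  have : lf n m (0 : ZMod n → ZMod m) = fun _ => 0 := by
    funext x
    simp [lf]
  rw [cc, this, cfrom_zero_fun]

/-- Induction principle: every function is built from `0` by adding indicators. -/
lemma funind (P : (ZMod n → ZMod m) → Prop) (h0 : P 0)
    (hstep : ∀ g J, P g → P (g + eZ n m J)) : ∀ g, P g := by
  have H : ∀ (N : ℕ) (a : ZMod n → ℕ), Rsum n a 0 ≤ N →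
      P (fun x => ((a x : ℕ) : ZMod m)) := by
    intro N
    induction N using Nat.strong_induction_on with
    | _ N ih =>
      intro a hN
      by_cases hz : ∀ x : ZMod n, a x = 0
      · have : (fun x => ((a x : ℕ) : ZMod m)) = 0 := by
          funext x
          rw [hz x]
          simp
        rw [this]
        exact h0
      · push_neg at hz
        obtain ⟨x, hx⟩ := hz
        have hx1 : 1 ≤ a x := Nat.one_le_iff_ne_zero.mpr hx
        set a' : ZMod n → ℕ := fun y => a y - eN n x y with ha'
        have hdec : ∀ y, a y = a' y + eN n x y := by
          intro y
          by_cases hy : y = x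
          · subst hy
            simp [ha', eN]
            omega
          · simp [ha', eN, hy]
        have hra : Rsum n a 0 = Rsum n a' 0 + 1 := by
          have : Rsum n a 0 = Rsum n (fun y => a' y + eN n x y) 0 := by
            apply Finset.sum_congr rfl
            intro k _
            exact hdec _
          rw [this, Rsum_add, Rsum_eN]
        have hRpos : 1 ≤ Rsum n a 0 := by
          have hxval : a ((x.val : ℕ) : ZMod n) = a x := by rw [natCast_val_self]
          have : a x ≤ Rsum n a 0 := by
            rw [Rsum, ← hxval]
            exact Finset.single_le_sum (f := fun k : ℕ => a ((k : ℕ) : ZMod n))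
              (fun k _ => Nat.zero_le _)
              (by simp only [Finset.mem_Ico]; exact ⟨Nat.zero_le _, ZMod.val_lt x⟩)
          omega
        have hcast : (fun y => ((a y : ℕ) : ZMod m))
            = (fun y => ((a' y : ℕ) : ZMod m)) + eZ n m x := by
          funext y
          rw [Pi.add_apply, hdec y]
          push_cast
          congr 1
          by_cases hy : y = x
          · subst hy
            simp [eN, eZ]
          · simp [eN, eZ, hy]
        rw [hcast]
        exact hstep _ x (ih (N - 1) (by omega) a' (by omega))
  intro g
  have : g = fun x => ((lf n m g x : ℕ) : ZMod m) := by
    funext x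
    rw [lf, ZMod.natCast_val, ZMod.cast_id]
  rw [this]
  exact H (Rsum n (lf n m g) 0) (lf n m g) le_rfl

end ZModLevel

section MulLevel
variable [NeZero n] [NeZero m]

/-- Twisted product on functions, mirroring multiplication in the wreath product. -/
def bop (g h : ZMod n → ZMod m) : ZMod n → ZMod m :=
  g + fun x => h (x + sig n s m (Ssum n m g))

lemma Ssum_add (g h : ZMod n → ZMod m) :
    Ssum n m (g + h) = Ssum n m g + Ssum n m h := by
  simp [Ssum, Finset.sum_add_distrib]

lemma Ssum_shift (h : ZMod n → ZMod m) (r : ZMod n) :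
    Ssum n m (fun x => h (x + r)) = Ssum n m h := by
  exact Fintype.sum_equiv (Equiv.addRight r) _ _ (fun x => rfl)

lemma Ssum_eZ (J : ZMod n) : Ssum n m (eZ n m J) = 1 := by
  rw [Ssum]
  simp only [eZ]
  rw [Finset.sum_ite_eq' Finset.univ J (fun _ => (1 : ZMod m))]
  simp

lemma Ssum_bop (g h : ZMod n → ZMod m) :
    Ssum n m (bop n s m g h) = Ssum n m g + Ssum n m h := by
  rw [bop, Ssum_add, Ssum_shift]

lemma bop_zero (g : ZMod n → ZMod m) : bop n s m g 0 = g := by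
  funext x
  simp [bop]

lemma cc_mul (hdvd : n ∣ m * s) (hm1 : 1 ≤ m) :
    ∀ (h g : ZMod n → ZMod m), cc n s m (bop n s m g h) = cc n s m g * cc n s m h := by
  apply funind n m (fun h => ∀ g, cc n s m (bop n s m g h) = cc n s m g * cc n s m h)
  · intro g
    rw [bop_zero, cc_zero, mul_one]
  · intro h J IH g
    have e1 : bop n s m g (h + eZ n m J)
        = bop n s m g h + eZ n m (J - sig n s m (Ssum n m g)) := by
      rw [bop, bop]
      have e2 : (fun x => (h + eZ n m J) (x + sig n s m (Ssum n m g)))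
          = (fun x => h (x + sig n s m (Ssum n m g)))
            + eZ n m (J - sig n s m (Ssum n m g)) := by
        funext x
        simp [eZ, eq_sub_iff_add_eq]
      rw [e2, ← add_assoc]
    rw [e1, keyZ n s m hdvd hm1, keyZ n s m hdvd hm1, IH, Ssum_bop, sig_add n s m hdvd,
      mul_assoc]
    congr 2
    abel

/-- The `bop`-inverse of `g`. -/
def ginv (g : ZMod n → ZMod m) : ZMod n → ZMod m :=
  fun y => - g (y - sig n s m (Ssum n m g))

lemma bop_ginv (g : ZMod n → ZMod m) : bop n s m g (ginv n s m g) = 0 := by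
  funext x
  simp [bop, ginv]

lemma cc_ginv (hdvd : n ∣ m * s) (hm1 : 1 ≤ m) (g : ZMod n → ZMod m) :
    cc n s m (ginv n s m g) = (cc n s m g)⁻¹ := by
  have h := cc_mul n s m hdvd hm1 (ginv n s m g) g
  rw [bop_ginv, cc_zero] at h
  exact (inv_eq_of_mul_eq_one_right h.symm).symm

lemma Ssum_ginv (g : ZMod n → ZMod m) :
    Ssum n m (ginv n s m g) = - Ssum n m g := by
  have hshift : ∀ (F : ZMod n → ZMod m) (r : ZMod n),
      Ssum n m (fun x => F (x - r)) = Ssum n m F := fun F r =>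
    Fintype.sum_equiv (Equiv.subRight r) _ _ (fun x => rfl)
  have h1 : Ssum n m (ginv n s m g)
      = - Ssum n m (fun y => g (y - sig n s m (Ssum n m g))) := by
    simp [Ssum, ginv]
  rw [h1, hshift]

end MulLevel

section Wside
variable [NeZero n] [NeZero m]

/-- The image of the generator `b i` in the wreath product. -/
def phi (i : ZMod n) : Wreath n m :=
  ⟨Multiplicative.ofAdd (eZ n m i), Multiplicative.ofAdd ((s : ZMod n))⟩

lemma shift_eZ (J r : ZMod n) : (fun x => eZ n m J (x + r)) = eZ n m (J - r) := by
  funext x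
  simp [eZ, eq_sub_iff_add_eq]

lemma wleft_mul (a c : Wreath n m) :
    ((a * c).left).toAdd = a.left.toAdd + fun x => c.left.toAdd (x + a.right.toAdd) := rfl

lemma wright_mul (a c : Wreath n m) :
    ((a * c).right).toAdd = a.right.toAdd + c.right.toAdd := rfl

lemma wright_inv (a : Wreath n m) : (a⁻¹.right).toAdd = - a.right.toAdd := rfl

lemma wleft_inv (a : Wreath n m) :
    (a⁻¹.left).toAdd = fun x => - a.left.toAdd (x - a.right.toAdd) := by
  funext x
  show - a.left.toAdd (x + - a.right.toAdd) = - a.left.toAdd (x - a.right.toAdd)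
  rw [sub_eq_add_neg]

lemma wext {a c : Wreath n m} (h1 : a.left.toAdd = c.left.toAdd)
    (h2 : a.right.toAdd = c.right.toAdd) : a = c := by
  cases a; cases c
  simp only at h1 h2
  congr 1

lemma phi_rel1 (i j : ZMod n) :
    phi n s m i * phi n s m (j + (s : ZMod n)) = phi n s m j * phi n s m (i + (s : ZMod n)) := by
  apply wext
  · rw [wleft_mul, wleft_mul]
    show eZ n m i + (fun x => eZ n m (j + (s : ZMod n)) (x + (s : ZMod n)))
        = eZ n m j + (fun x => eZ n m (i + (s : ZMod n)) (x + (s : ZMod n)))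
    rw [shift_eZ, shift_eZ, add_sub_cancel_right, add_sub_cancel_right]
    abel
  · rw [wright_mul, wright_mul]
    rfl

lemma phi_prod (i : ZMod n) (M : ℕ) :
    ((List.range M).map fun k : ℕ => phi n s m (i + ((k * s : ℕ) : ZMod n))).prod
      = ⟨Multiplicative.ofAdd (fun x => if x = i then (M : ZMod m) else 0),
          Multiplicative.ofAdd (((M * s : ℕ) : ZMod n))⟩ := by
  induction M with
  | zero =>
    apply wext
    · show (0 : ZMod n → ZMod m) = fun x => if x = i then ((0 : ℕ) : ZMod m) else 0
      funext x
      simp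
    · show (0 : ZMod n) = (((0 * s : ℕ) : ℕ) : ZMod n)
      simp
  | succ M ih =>
    rw [List.range_succ, List.map_append, List.prod_append, ih, List.map_singleton,
      List.prod_singleton]
    apply wext
    · rw [wleft_mul]
      show (fun x => if x = i then (M : ZMod m) else 0)
            + (fun x => eZ n m (i + ((M * s : ℕ) : ZMod n)) (x + ((M * s : ℕ) : ZMod n)))
          = fun x => if x = i then ((M + 1 : ℕ) : ZMod m) else 0
      rw [shift_eZ, add_sub_cancel_right]
      funext x
      by_cases hx : x = i
      · subst hx
        simp only [eZ, if_pos rfl, Pi.add_apply]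
        push_cast
        ring
      · simp [eZ, hx]
    · rw [wright_mul]
      show ((M * s : ℕ) : ZMod n) + ((s : ℕ) : ZMod n) = (((M + 1) * s : ℕ) : ZMod n)
      push_cast
      ring

lemma phi_rel2 (hdvd : n ∣ m * s) (i : ZMod n) :
    ((List.range m).map fun k : ℕ => phi n s m (i + ((k * s : ℕ) : ZMod n))).prod = 1 := by
  rw [phi_prod]
  apply wext
  · show (fun x => if x = i then ((m : ℕ) : ZMod m) else 0) = (0 : ZMod n → ZMod m)
    funext x
    simp [ZMod.natCast_self]
  · show ((m * s : ℕ) : ZMod n) = 0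
    exact (ZMod.natCast_eq_zero_iff _ _).mpr hdvd

lemma lift_phi_rels (hdvd : n ∣ m * s) :
    ∀ r ∈ relsX n s m, FreeGroup.lift (phi n s m) r = 1 := by
  intro r hr
  rcases hr with ⟨i, j, rfl⟩ | ⟨i, rfl⟩
  · simp only [map_mul, map_inv, FreeGroup.lift_apply_of]
    rw [mul_inv_eq_one]
    exact phi_rel1 n s m i j
  · rw [map_list_prod]
    have key : (List.map (⇑(FreeGroup.lift (phi n s m)))
        (List.map (fun k : ZMod n => FreeGroup.of (i + k * (s : ZMod n)))
          ((List.range m).flatMap fun a : ℕ => [(a : ZMod n)]))).prod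
        = ((List.range m).map fun k : ℕ => phi n s m (i + ((k * s : ℕ) : ZMod n))).prod := by
      rw [flatMap_single, List.map_map, List.map_map]
      apply congrArg List.prod
      apply List.map_congr_left
      intro k _
      show FreeGroup.lift (phi n s m) (FreeGroup.of (i + (k : ZMod n) * (s : ZMod n))) = _
      rw [FreeGroup.lift_apply_of]
      congr 1
      push_cast
      ring
    exact key.trans (phi_rel2 n s m hdvd i)

end Wside

section Main
variable [NeZero n] [NeZero m]

/-- The invariant carried through the induction over the presented group. -/
def Pred (F : X n s m →* Wreath n m) (x : X n s m) : Prop :=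
  (F x).right.toAdd = sig n s m (Ssum n m ((F x).left.toAdd)) ∧
    cc n s m ((F x).left.toAdd) = x

lemma Ssum_zero : Ssum n m (0 : ZMod n → ZMod m) = 0 := by
  simp [Ssum]

lemma pred_one (F : X n s m →* Wreath n m) : Pred n s m F 1 := by
  have h0 : (((1 : Wreath n m)).left).toAdd = (0 : ZMod n → ZMod m) := rfl
  have h1 : (((1 : Wreath n m)).right).toAdd = (0 : ZMod n) := rfl
  constructor
  · rw [map_one, h0, h1, Ssum_zero, sig_zero]
  · rw [map_one, h0, cc_zero]

lemma pred_mul (hdvd : n ∣ m * s) (hm1 : 1 ≤ m) (F : X n s m →* Wreath n m)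
    (x y : X n s m) (hx : Pred n s m F x) (hy : Pred n s m F y) :
    Pred n s m F (x * y) := by
  obtain ⟨hx1, hx2⟩ := hx
  obtain ⟨hy1, hy2⟩ := hy
  have hl : ((F (x * y)).left).toAdd
      = bop n s m ((F x).left).toAdd ((F y).left).toAdd := by
    rw [map_mul, wleft_mul, bop, hx1]
  have hr : ((F (x * y)).right).toAdd = ((F x).right).toAdd + ((F y).right).toAdd := by
    rw [map_mul, wright_mul]
  constructor
  · rw [hr, hl, Ssum_bop, sig_add n s m hdvd, hx1, hy1]
  · rw [hl, cc_mul n s m hdvd hm1, hx2, hy2]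

lemma pred_inv (hdvd : n ∣ m * s) (hm1 : 1 ≤ m) (F : X n s m →* Wreath n m)
    (x : X n s m) (hx : Pred n s m F x) : Pred n s m F x⁻¹ := by
  obtain ⟨hx1, hx2⟩ := hx
  have hl : ((F x⁻¹).left).toAdd = ginv n s m ((F x).left).toAdd := by
    rw [map_inv, wleft_inv, hx1]
    rfl
  have hr : ((F x⁻¹).right).toAdd = - ((F x).right).toAdd := by
    rw [map_inv, wright_inv]
  constructor
  · rw [hr, hl, Ssum_ginv, sig_neg n s m hdvd, hx1]
  · rw [hl, cc_ginv n s m hdvd hm1, hx2]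

lemma pred_of (hdvd : n ∣ m * s) (hm1 : 1 ≤ m) (F : X n s m →* Wreath n m)
    (hgen : ∀ i : ZMod n, F (b n s m i) = phi n s m i) (i : ZMod n) :
    Pred n s m F (b n s m i) := by
  have hl : ((F (b n s m i)).left).toAdd = eZ n m i := by rw [hgen i]; rfl
  have hr : ((F (b n s m i)).right).toAdd = ((s : ℕ) : ZMod n) := by rw [hgen i]; rfl
  have hsig1 : sig n s m (1 : ZMod m) = ((s : ℕ) : ZMod n) := by
    have h1 : ((1 : ℕ) : ZMod m) = (1 : ZMod m) := Nat.cast_one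
    rw [← h1, sig_natCast n s m hdvd 1, one_mul]
  constructor
  · rw [hr, hl, Ssum_eZ, hsig1]
  · rw [hl]
    have h := keyZ n s m hdvd hm1 0 i
    rw [zero_add, cc_zero, one_mul, Ssum_zero, sig_zero, add_zero] at h
    exact h

lemma pred_all (hdvd : n ∣ m * s) (hm1 : 1 ≤ m) (F : X n s m →* Wreath n m)
    (hgen : ∀ i : ZMod n, F (b n s m i) = phi n s m i) (x : X n s m) :
    Pred n s m F x := by
  refine PresentedGroup.induction_on x ?_
  intro z
  refine FreeGroup.induction_on (C := fun w => Pred n s m F (PresentedGroup.mk (relsX n s m) w))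
    z ?_ ?_ ?_ ?_
  · show Pred n s m F (PresentedGroup.mk (relsX n s m) 1)
    rw [map_one]
    exact pred_one n s m F
  · intro i
    exact pred_of n s m hdvd hm1 F hgen i
  · intro i _
    show Pred n s m F (PresentedGroup.mk (relsX n s m) (FreeGroup.of i)⁻¹)
    rw [map_inv]
    apply pred_inv n s m hdvd hm1 F
    exact pred_of n s m hdvd hm1 F hgen i
  · intro w v hw hv
    show Pred n s m F (PresentedGroup.mk (relsX n s m) (w * v))
    rw [map_mul]
    exact pred_mul n s m hdvd hm1 F _ _ hw hv

end Main

end Stmt17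

/-- For `n, s ≥ 1` and `m = n / gcd(n, s)`, the group `X` presented by generators
`b₀, …, b_{n−1}` with relations `b_i b_{(j+s) mod n} = b_j b_{(i+s) mod n}` and
`b_i b_{(i+s) mod n} ⋯ b_{(i+(m−1)s) mod n} = e` embeds into the wreath product
`C_m ≀ C_n`. -/
theorem stmt17 (n s : ℕ) (hn : 1 ≤ n) (hs : 1 ≤ s) (m : ℕ) (hm : m = n / Nat.gcd n s) :
    ∃ f : PresentedGroup (relsX n s m) →* Wreath n m, Function.Injective f := by
  haveI : NeZero n := ⟨by omega⟩
  have hd : Nat.gcd n s ∣ n := Nat.gcd_dvd_left n s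
  have hds : Nat.gcd n s ∣ s := Nat.gcd_dvd_right n s
  have hdpos : 0 < Nat.gcd n s := Nat.gcd_pos_of_pos_left s hn
  have hm1 : 1 ≤ m := by
    rw [hm]
    exact Nat.div_pos (Nat.le_of_dvd hn hd) hdpos
  haveI : NeZero m := ⟨by omega⟩
  have hdvd : n ∣ m * s := by
    obtain ⟨v, hv⟩ := hds
    refine ⟨v, ?_⟩
    calc m * s = m * (Nat.gcd n s * v) := by rw [← hv]
    _ = (m * Nat.gcd n s) * v := by ring
    _ = n * v := by rw [hm, Nat.div_mul_cancel hd]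
  refine ⟨PresentedGroup.toGroup (Stmt17.lift_phi_rels n s m hdvd), ?_⟩
  set F := PresentedGroup.toGroup (Stmt17.lift_phi_rels n s m hdvd) with hF
  have hgen : ∀ i : ZMod n, F (Stmt17.b n s m i) = Stmt17.phi n s m i := by
    intro i
    exact PresentedGroup.toGroup.of (Stmt17.lift_phi_rels n s m hdvd)
  intro x y hxy
  have hx := (Stmt17.pred_all n s m hdvd hm1 F hgen x).2
  have hy := (Stmt17.pred_all n s m hdvd hm1 F hgen y).2
  rw [← hx, ← hy, hxy]
end
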